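/- arXiv:1812.00705 — 7 statements merged into one kernel-verified Lean document; each statement's English description precedes it below -/
import Mathlib

section
/- Let q be an odd prime with q ≡ 1 (mod 4). Then every group of order 4q is isomorphic to one of: C_{4q}, C_q × C_2 × C_2, the dihedral group D_{2q} of order 4q, the semidirect product C_q ⋊_2 C_4 (with C_4 acting by inversion), or the semidirect product C_q ⋊_4 C_4 given by ⟨a,b : a^q=b^4=1, bab^{-1}=a^r⟩ where r is a primitive 4th root of unity modulo q. -/
open Subgroup

private lemma pow_val_natCast' {G : Type*} [Group G] {g : G} {n : ℕ} [NeZero n]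
    (hg : orderOf g = n) (m : ℕ) : g ^ ((m : ZMod n)).val = g ^ m := by
  subst hg
  rw [ZMod.val_natCast, pow_mod_orderOf]

private lemma pow_val_add' {G : Type*} [Group G] {g : G} {n : ℕ} [NeZero n]
    (hg : orderOf g = n) (i j : ZMod n) :
    g ^ (i + j).val = g ^ i.val * g ^ j.val := by
  subst hg
  rw [ZMod.val_add, pow_mod_orderOf, pow_add]

private lemma conj_pow_iter {G : Type*} [Group G] {b a : G} {k : ℕ}
    (h : b * a * b⁻¹ = a ^ k) : ∀ n : ℕ, b ^ n * a * (b ^ n)⁻¹ = a ^ (k ^ n) := by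
  intro n
  induction n with
  | zero => simp
  | succ n ih =>
    have : b ^ (n+1) * a * (b ^ (n+1))⁻¹ = b * (b ^ n * a * (b ^ n)⁻¹) * b⁻¹ := by
      rw [pow_succ']; group
    rw [this, ih, ← conj_pow, h, ← pow_mul, pow_succ]
    ring_nf

private lemma closure_top_of_dvd {G : Type*} [Group G] [Finite G] {H : Subgroup G}
    (h : Nat.card G ∣ Nat.card H) : H = ⊤ :=
  Subgroup.eq_top_of_card_eq _ (Nat.dvd_antisymm (Subgroup.card_subgroup_dvd_card H) h)

private lemma orderOf_dvd_card_subgroup {G : Type*} [Group G] {H : Subgroup G} {a : G}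
    (h : a ∈ H) : orderOf a ∣ Nat.card H := by
  have := orderOf_dvd_natCard (⟨a, h⟩ : H)
  rwa [Subgroup.orderOf_mk] at this

private lemma pow_eq_of_cast_one {G : Type*} [Group G] {a : G} {q : ℕ} (ha : orderOf a = q)
    {k : ℕ} (h : ((k : ℕ) : ZMod q) = 1) : a ^ k = a := by
  have h1 : k ≡ 1 [MOD q] := by
    rwa [show (1 : ZMod q) = ((1 : ℕ) : ZMod q) by norm_num, ZMod.natCast_eq_natCast_iff] at h
  conv_rhs => rw [← pow_one a]
  exact pow_eq_pow_iff_modEq.mpr (ha ▸ h1)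

private lemma pow_eq_of_cast_neg_one {G : Type*} [Group G] {a : G} {q : ℕ} (ha : orderOf a = q)
    {k : ℕ} (h : ((k : ℕ) : ZMod q) = -1) : a ^ k = a⁻¹ := by
  have h0 : ((k + 1 : ℕ) : ZMod q) = 0 := by push_cast [h]; ring
  have hdvd : q ∣ k + 1 := (ZMod.natCast_eq_zero_iff _ _).mp h0
  have h1 : a ^ (k + 1) = 1 := orderOf_dvd_iff_pow_eq_one.mp (ha ▸ hdvd)
  rw [pow_succ] at h1
  exact eq_inv_of_mul_eq_one_left h1

private lemma card_pair {G : Type*} [Group G] [Finite G] {P : Subgroup G} (hP : Nat.card P = 4)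
    {x y : G} (hx : x ∈ P) (hy : y ∈ P) (hx1 : x ≠ 1) (hy1 : y ≠ 1) (hxy : x ≠ y) :
    Nat.card (closure ({x, y} : Set G)) = 4 := by
  set K := closure ({x, y} : Set G) with hK
  have hxK : x ∈ K := subset_closure (Set.mem_insert x _)
  have hyK : y ∈ K := subset_closure (Set.mem_insert_of_mem _ rfl)
  have hKP : K ≤ P := by
    rw [hK, closure_le]
    rintro z (rfl | rfl) <;> assumption
  have hdvd : Nat.card K ∣ 4 := hP ▸ Subgroup.card_dvd_of_le hKP
  have hsub : ({1, x, y} : Set G) ⊆ (K : Set G) := by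
    rintro z (rfl | rfl | rfl)
    exacts [K.one_mem, hxK, hyK]
  have h3 : ({1, x, y} : Set G).ncard = 3 := by
    rw [Set.ncard_insert_of_notMem (by simp [Ne.symm hx1, Ne.symm hy1]),
      Set.ncard_pair hxy]
  have hle : 3 ≤ Nat.card K := by
    rw [← SetLike.coe_sort_coe, Nat.card_coe_set_eq]
    exact h3 ▸ Set.ncard_le_ncard hsub (Set.toFinite _)
  obtain ⟨i, hi, hKi⟩ := (Nat.dvd_prime_pow Nat.prime_two).mp
    ((show (4 : ℕ) = 2 ^ 2 by norm_num) ▸ hdvd)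
  interval_cases i <;> omega

private lemma isoDihedral {G : Type*} [Group G] [Finite G] {n : ℕ} (hn : 1 < n) {R S : G}
    (hR : orderOf R = n) (hS2 : S * S = 1) (hconj : S * R * S⁻¹ = R⁻¹)
    (hcard : Nat.card G = 2 * n) (hgen : closure ({R, S} : Set G) = ⊤) :
    Nonempty (G ≃* DihedralGroup n) := by
  haveI : NeZero n := ⟨by omega⟩
  have hSinv : S⁻¹ = S := by
    rw [← mul_one S⁻¹, ← hS2, ← mul_assoc, inv_mul_cancel, one_mul]
  have hswapL : ∀ k : ℕ, S * R ^ k = (R ^ k)⁻¹ * S := by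
    intro k
    induction k with
    | zero => simp
    | succ m ih =>
      have h1 : S * R = R⁻¹ * S := by rw [← hconj]; group
      calc S * R ^ (m+1) = (S * R ^ m) * R := by rw [pow_succ, mul_assoc]
        _ = (R ^ m)⁻¹ * (S * R) := by rw [ih]; group
        _ = (R ^ m)⁻¹ * (R⁻¹ * S) := by rw [h1]
        _ = (R ^ (m+1))⁻¹ * S := by rw [pow_succ]; group
  have hswapR : ∀ k : ℕ, R ^ k * S = S * (R ^ k)⁻¹ := by
    intro k
    have := hswapL k
    calc R ^ k * S = R ^ k * (S * R ^ k) * (R ^ k)⁻¹ := by group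
      _ = R ^ k * ((R ^ k)⁻¹ * S) * (R ^ k)⁻¹ := by rw [this]
      _ = S * (R ^ k)⁻¹ := by group
  set ρ : ZMod n → G := fun i => R ^ i.val with hρ
  have hadd : ∀ i j : ZMod n, ρ (i + j) = ρ i * ρ j := fun i j => pow_val_add' hR i j
  have hzero : ρ 0 = 1 := by simp [hρ]
  have hneg : ∀ i : ZMod n, ρ (-i) = (ρ i)⁻¹ := fun i => by
    have := hadd (-i) i
    rw [neg_add_cancel, hzero] at this
    exact eq_inv_of_mul_eq_one_left this.symm
  let φ : DihedralGroup n → G := fun x =>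
    match x with
    | DihedralGroup.r i => ρ i
    | DihedralGroup.sr i => S * ρ i
  have hmul : ∀ x y : DihedralGroup n, φ (x * y) = φ x * φ y := by
    rintro (i | i) (j | j)
    · show ρ (i + j) = ρ i * ρ j
      exact hadd i j
    · show S * ρ (j - i) = ρ i * (S * ρ j)
      calc S * ρ (j - i) = S * (ρ (-i) * ρ j) := by
            rw [← hadd]; ring_nf
        _ = (S * (ρ i)⁻¹) * ρ j := by rw [hneg, mul_assoc]
        _ = (ρ i * S) * ρ j := by rw [← hswapR]
        _ = ρ i * (S * ρ j) := by rw [mul_assoc]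
    · show S * ρ (i + j) = (S * ρ i) * ρ j
      rw [hadd, mul_assoc]
    · show ρ (j - i) = (S * ρ i) * (S * ρ j)
      calc ρ (j - i) = ρ (-i) * ρ j := by rw [← hadd]; ring_nf
        _ = (ρ i)⁻¹ * ρ j := by rw [hneg]
        _ = (S * (S * (ρ i)⁻¹)) * ρ j := by
            rw [← mul_assoc, hS2, one_mul]
        _ = (S * (ρ i * S)) * ρ j := by rw [← hswapR]
        _ = (S * ρ i) * (S * ρ j) := by group
  let φh : DihedralGroup n →* G := MonoidHom.mk' φ hmul
  have hsurj : Function.Surjective φh := by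
    have hRmem : R ∈ φh.range := ⟨DihedralGroup.r 1, by
      show ρ 1 = R
      simp [hρ, ZMod.val_one_eq_one_mod, Nat.mod_eq_of_lt hn]⟩
    have hSmem : S ∈ φh.range := ⟨DihedralGroup.sr 0, by
      show S * ρ 0 = S
      rw [hzero, mul_one]⟩
    have : closure ({R, S} : Set G) ≤ φh.range := by
      rw [closure_le]
      rintro x (rfl | rfl)
      exacts [hRmem, hSmem]
    rw [hgen] at this
    rwa [← MonoidHom.range_eq_top, eq_top_iff]
  haveI : Fintype G := Fintype.ofFinite G
  have hbij : Function.Bijective φh := by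
    rw [Fintype.bijective_iff_surjective_and_card]
    refine ⟨hsurj, ?_⟩
    rw [DihedralGroup.card, ← Nat.card_eq_fintype_card, hcard]
  exact ⟨(MulEquiv.ofBijective φh hbij).symm⟩

private lemma isoProd {G : Type*} [Group G] [Finite G] {q : ℕ} (hq : 1 < q) {a x y : G}
    (ha : orderOf a = q) (hx : orderOf x = 2) (hy : orderOf y = 2)
    (hax : Commute a x) (hay : Commute a y) (hxyc : Commute x y)
    (hcard : Nat.card G = 4 * q)
    (hgen : closure ({a, x, y} : Set G) = ⊤) :
    Nonempty (G ≃* Multiplicative (ZMod q × ZMod 2 × ZMod 2)) := by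
  haveI : NeZero q := ⟨by omega⟩
  haveI : Fact (1 < q) := ⟨hq⟩
  let ψ : Multiplicative (ZMod q × ZMod 2 × ZMod 2) → G := fun z =>
    a ^ (z.toAdd.1.val) * x ^ (z.toAdd.2.1.val) * y ^ (z.toAdd.2.2.val)
  have hmul : ∀ z w, ψ (z * w) = ψ z * ψ w := by
    rintro z w
    show a ^ ((z.toAdd.1 + w.toAdd.1).val) * x ^ ((z.toAdd.2.1 + w.toAdd.2.1).val) *
        y ^ ((z.toAdd.2.2 + w.toAdd.2.2).val) =
      (a ^ z.toAdd.1.val * x ^ z.toAdd.2.1.val * y ^ z.toAdd.2.2.val) *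
      (a ^ w.toAdd.1.val * x ^ w.toAdd.2.1.val * y ^ w.toAdd.2.2.val)
    set i := z.toAdd.1; set j := z.toAdd.2.1; set k := z.toAdd.2.2
    set i' := w.toAdd.1; set j' := w.toAdd.2.1; set k' := w.toAdd.2.2
    rw [pow_val_add' ha, pow_val_add' hx, pow_val_add' hy,
      (hax.pow_pow i'.val j.val).mul_mul_mul_comm,
      ((hay.pow_pow i'.val k.val).mul_left (hxyc.pow_pow j'.val k.val)).mul_mul_mul_comm]
  let ψh : Multiplicative (ZMod q × ZMod 2 × ZMod 2) →* G := MonoidHom.mk' ψ hmul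
  have hamem : a ∈ ψh.range := ⟨Multiplicative.ofAdd (1, 0, 0), by
    show a ^ ((1 : ZMod q)).val * x ^ ((0 : ZMod 2)).val * y ^ ((0 : ZMod 2)).val = a
    rw [ZMod.val_one, ZMod.val_zero]
    simp⟩
  have hxmem : x ∈ ψh.range := ⟨Multiplicative.ofAdd (0, 1, 0), by
    show a ^ ((0 : ZMod q)).val * x ^ ((1 : ZMod 2)).val * y ^ ((0 : ZMod 2)).val = x
    rw [ZMod.val_one, ZMod.val_zero]
    simp⟩
  have hymem : y ∈ ψh.range := ⟨Multiplicative.ofAdd (0, 0, 1), by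
    show a ^ ((0 : ZMod q)).val * x ^ ((0 : ZMod 2)).val * y ^ ((1 : ZMod 2)).val = y
    rw [ZMod.val_one, ZMod.val_zero]
    simp⟩
  have hsurj : Function.Surjective ψh := by
    have : closure ({a, x, y} : Set G) ≤ ψh.range := by
      rw [closure_le]
      rintro g (rfl | rfl | rfl)
      exacts [hamem, hxmem, hymem]
    rw [hgen] at this
    rwa [← MonoidHom.range_eq_top, eq_top_iff]
  haveI : Fintype G := Fintype.ofFinite G
  have hbij : Function.Bijective ψh := by
    rw [Fintype.bijective_iff_surjective_and_card]
    refine ⟨hsurj, ?_⟩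
    rw [← Nat.card_eq_fintype_card, ← Nat.card_eq_fintype_card, hcard]
    show Nat.card (ZMod q × ZMod 2 × ZMod 2) = 4 * q
    simp [Nat.card_prod, Nat.card_zmod]
    ring
  exact ⟨(MulEquiv.ofBijective ψh hbij).symm⟩

private lemma dihedral_case {G : Type*} [Group G] [Finite G] {q : ℕ} (hq : q.Prime)
    (hodd : Odd q) (hG : Nat.card G = 4 * q) {a x y : G} (ha : orderOf a = q)
    (hy1 : y ≠ 1)
    (hx2 : x * x = 1) (hy2 : y * y = 1) (hc : x * y = y * x)
    (hxa : x * a * x⁻¹ = a⁻¹) (hya : y * a * y⁻¹ = a)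
    (hK : Nat.card (Subgroup.closure ({x, y} : Set G)) = 4) :
    Nonempty (G ≃* DihedralGroup (2 * q)) := by
  haveI : Fact (Nat.Prime 2) := ⟨Nat.prime_two⟩
  have hq1 : 1 < q := hq.one_lt
  have hyinv : y⁻¹ = y := (eq_inv_of_mul_eq_one_left hy2).symm
  have hxinv : x⁻¹ = x := (eq_inv_of_mul_eq_one_left hx2).symm
  have hcay : Commute a y := by
    have h := congrArg (· * y) hya
    simp only [inv_mul_cancel_right] at h
    exact ((commute_iff_eq y a).mpr h).symm
  have hoy : orderOf y = 2 := orderOf_eq_prime (by rw [pow_two]; exact hy2) hy1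
  set R := a * y with hR
  have horderR : orderOf R = 2 * q := by
    rw [hR, hcay.orderOf_mul_eq_mul_orderOf_of_coprime
      (by rw [ha, hoy]; exact hodd.coprime_two_right), ha, hoy, mul_comm]
  have hy2' : y ^ 2 = 1 := by rw [pow_two]; exact hy2
  have hyq : y ^ q = y := by
    obtain ⟨m, hm⟩ := hodd
    rw [hm, pow_succ, pow_mul, hy2', one_pow, one_mul]
  have haq : a ^ q = 1 := by rw [← ha]; exact pow_orderOf_eq_one a
  have hRq : R ^ q = y := by
    rw [hR, hcay.mul_pow, haq, one_mul, hyq]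
  have hconj : x * R * x⁻¹ = R⁻¹ := by
    have h1 : x * R * x⁻¹ = (x * a * x⁻¹) * (x * y * x⁻¹) := by rw [hR]; group
    rw [h1, hxa, hxinv]
    have h2 : x * y * x = y := by rw [hc, mul_assoc, hx2, mul_one]
    rw [h2, hR, mul_inv_rev, hyinv, (hcay.inv_left).eq]
  set H := closure ({R, x} : Set G) with hH
  have hRH : R ∈ H := subset_closure (Set.mem_insert R _)
  have hxH : x ∈ H := subset_closure (Set.mem_insert_of_mem _ rfl)
  have hyH : y ∈ H := hRq ▸ pow_mem hRH q
  have haH : a ∈ H := by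
    have : a = R * y⁻¹ := by rw [hR, mul_inv_cancel_right]
    rw [this]
    exact mul_mem hRH (inv_mem hyH)
  have hgen : H = ⊤ := by
    apply closure_top_of_dvd
    rw [hG]
    have h1 : q ∣ Nat.card H := ha ▸ orderOf_dvd_card_subgroup haH
    have h2 : 4 ∣ Nat.card H := by
      have hle : closure ({x, y} : Set G) ≤ H := by
        rw [closure_le]
        rintro z (rfl | rfl) <;> assumption
      exact hK ▸ Subgroup.card_dvd_of_le hle
    have hco : Nat.Coprime 4 q :=
      (show ((2:ℕ) ^ 2).Coprime q from (Nat.coprime_two_left.mpr hodd).pow_left 2)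
    exact hco.mul_dvd_of_dvd_of_dvd h2 h1
  exact isoDihedral (by omega) horderR hx2 hconj (by rw [hG]; ring) hgen

/-- Every group of order `4q`, with `q` an odd prime congruent to 1 mod 4, is isomorphic to
`C_{4q}`, `C_q × C_2 × C_2`, the dihedral group of order `4q`, the semidirect product
`C_q ⋊₂ C_4` (with `C_4` acting by inversion), or the semidirect product `C_q ⋊₄ C_4`
given by `⟨a,b : a^q = b^4 = 1, b a b⁻¹ = a^r⟩` with `r` of multiplicative order 4 mod `q`. -/
theorem stmt_1 (q : ℕ) (hq : q.Prime) (hodd : Odd q) (hmod : q % 4 = 1)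
    (G : Type) [Group G] [Finite G] (hG : Nat.card G = 4 * q) :
    Nonempty (G ≃* Multiplicative (ZMod (4 * q))) ∨
    Nonempty (G ≃* Multiplicative (ZMod q × ZMod 2 × ZMod 2)) ∨
    Nonempty (G ≃* DihedralGroup (2 * q)) ∨
    (∃ a b : G, orderOf a = q ∧ orderOf b = 4 ∧ b * a * b⁻¹ = a⁻¹ ∧
      Subgroup.closure {a, b} = ⊤) ∨
    (∃ a b : G, ∃ r : (ZMod q)ˣ, orderOf r = 4 ∧ orderOf a = q ∧ orderOf b = 4 ∧
      b * a * b⁻¹ = a ^ ((r : ZMod q).val) ∧ Subgroup.closure {a, b} = ⊤) := by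
  haveI : Fact q.Prime := ⟨hq⟩
  haveI : Fact (Nat.Prime 2) := ⟨Nat.prime_two⟩
  have hq5 : 5 ≤ q := by
    by_contra h
    push_neg at h
    interval_cases q <;> simp_all (config := {decide := true})
  have hq1 : 1 < q := by omega
  haveI : NeZero q := ⟨by omega⟩
  have hq0 : q ≠ 0 := by omega
  have hqodd : q % 2 = 1 := Nat.odd_iff.mp hodd
  have hco4q : Nat.Coprime 4 q :=
    (show ((2:ℕ) ^ 2).Coprime q from (Nat.coprime_two_left.mpr hodd).pow_left 2)
  -- the Sylow q-subgroup
  obtain ⟨P⟩ := (inferInstance : Nonempty (Sylow q G))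
  have hfq : (Nat.card G).factorization q = 1 := by
    rw [hG, Nat.factorization_mul (by norm_num) hq0, Finsupp.add_apply,
      Nat.factorization_eq_zero_of_not_dvd
        (fun h => by have := Nat.le_of_dvd (by norm_num) h; omega),
      hq.factorization_self]
  have hPcard : Nat.card P = q := by
    rw [P.card_eq_multiplicity, hfq, pow_one]
  have hidx : (P : Subgroup G).index = 4 := by
    have h := Subgroup.card_mul_index (P : Subgroup G)
    rw [hPcard, hG, mul_comm 4 q] at h
    exact Nat.eq_of_mul_eq_mul_left (by omega) h
  have hnq : Nat.card (Sylow q G) = 1 := by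
    have h2 := Sylow.card_dvd_index P
    rw [hidx] at h2
    have hle : Nat.card (Sylow q G) ≤ 4 := Nat.le_of_dvd (by norm_num) h2
    have h1 : Nat.card (Sylow q G) % q = 1 % q := card_sylow_modEq_one q G
    rwa [Nat.mod_eq_of_lt (by omega), Nat.mod_eq_of_lt (by omega)] at h1
  haveI : Subsingleton (Sylow q G) := (Nat.card_eq_one_iff_unique.mp hnq).1
  have hPnorm : (P : Subgroup G).Normal := by
    rw [← Subgroup.normalizer_eq_top_iff, eq_top_iff']
    intro g
    exact Sylow.smul_eq_iff_mem_normalizer.mp (Subsingleton.elim _ _)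
  -- generator of P
  haveI : IsCyclic ↥(P : Subgroup G) := isCyclic_of_prime_card (p := q) hPcard
  obtain ⟨g, hgsurj⟩ := IsCyclic.exists_generator (α := ↥(P : Subgroup G))
  set a : G := (g : G) with haa
  have hzg : Subgroup.zpowers g = ⊤ := by
    rw [eq_top_iff']
    exact hgsurj
  have ha : orderOf a = q := by
    rw [haa, Subgroup.orderOf_coe, ← Nat.card_zpowers, hzg]
    exact Subgroup.card_top.trans hPcard
  have conj_exp : ∀ t : G, ∃ k : ℕ, t * a * t⁻¹ = a ^ k := by
    intro t
    have hmem : t * a * t⁻¹ ∈ (P : Subgroup G) := hPnorm.conj_mem a g.2 t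
    obtain ⟨m, hm⟩ := Subgroup.mem_zpowers_iff.mp (hgsurj ⟨_, hmem⟩)
    have hz : t * a * t⁻¹ ∈ Subgroup.zpowers a := by
      refine ⟨m, ?_⟩
      have := congrArg (Subtype.val) hm
      simpa [haa] using this
    rw [← mem_powers_iff_mem_zpowers] at hz
    obtain ⟨k, hk⟩ := (Submonoid.mem_powers_iff _ _).mp hz
    exact ⟨k, hk.symm⟩
  -- conjugation squared lemma
  have key2 : ∀ t : G, t * t = 1 → t * a * t⁻¹ = a ∨ t * a * t⁻¹ = a⁻¹ := by
    intro t ht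
    obtain ⟨k, hk⟩ := conj_exp t
    have h2 : a ^ (k ^ 2) = a := by
      have h := conj_pow_iter hk 2
      rw [pow_two, ht] at h
      simpa using h.symm
    have hz : ((k : ZMod q)) ^ 2 = 1 := by
      have hmod2 : k ^ 2 ≡ 1 [MOD q] := by
        rw [← ha]
        exact pow_eq_pow_iff_modEq.mp (by rw [h2, pow_one])
      have := (ZMod.natCast_eq_natCast_iff _ _ _).mpr hmod2
      push_cast at this
      exact this
    rcases sq_eq_one_iff.mp hz with h1 | hneg
    · left; rw [hk, pow_eq_of_cast_one ha h1]
    · right; rw [hk, pow_eq_of_cast_neg_one ha hneg]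
  -- Sylow 2-subgroup
  obtain ⟨P2⟩ := (inferInstance : Nonempty (Sylow 2 G))
  have hf2 : (Nat.card G).factorization 2 = 2 := by
    rw [hG, show (4 : ℕ) = 2 ^ 2 by norm_num,
      Nat.factorization_mul (by norm_num) hq0, Finsupp.add_apply,
      Nat.Prime.factorization_pow Nat.prime_two, Finsupp.single_eq_same,
      Nat.factorization_eq_zero_of_not_dvd (by omega)]
  have hP2card : Nat.card P2 = 4 := by
    rw [P2.card_eq_multiplicity, hf2]
    norm_num
  by_cases hb4 : ∃ b : G, orderOf b = 4
  · -- Sylow 2 is cyclic of order 4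
    obtain ⟨b, hb⟩ := hb4
    obtain ⟨k, hk⟩ := conj_exp b
    have hb4' : b ^ 4 = 1 := by rw [← hb]; exact pow_orderOf_eq_one b
    have h4 : a ^ (k ^ 4) = a := by
      have h := conj_pow_iter hk 4
      rw [hb4'] at h
      simpa using h.symm
    have hkz : ((k : ZMod q)) ^ 4 = 1 := by
      have hmod4 : k ^ 4 ≡ 1 [MOD q] := by
        rw [← ha]
        exact pow_eq_pow_iff_modEq.mp (by rw [h4, pow_one])
      have := (ZMod.natCast_eq_natCast_iff _ _ _).mpr hmod4
      push_cast at this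
      exact this
    have hclos : Subgroup.closure ({a, b} : Set G) = ⊤ := by
      apply closure_top_of_dvd
      rw [hG]
      have h1 : q ∣ Nat.card (closure ({a, b} : Set G)) :=
        ha ▸ orderOf_dvd_card_subgroup (subset_closure (Set.mem_insert a _))
      have h2 : 4 ∣ Nat.card (closure ({a, b} : Set G)) :=
        hb ▸ orderOf_dvd_card_subgroup (subset_closure (Set.mem_insert_of_mem _ rfl))
      exact hco4q.mul_dvd_of_dvd_of_dvd h2 h1
    have hunit : IsUnit ((k : ZMod q)) := IsUnit.of_pow_eq_one hkz (by norm_num)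
    have hu4 : hunit.unit ^ 4 = 1 := by
      ext
      push_cast [hunit.unit_spec]
      exact hkz
    have hudvd : orderOf hunit.unit ∣ 4 := orderOf_dvd_of_pow_eq_one hu4
    obtain ⟨i, hi, hoi⟩ := (Nat.dvd_prime_pow Nat.prime_two).mp
      ((show (4 : ℕ) = 2 ^ 2 by norm_num) ▸ hudvd)
    interval_cases i
    · -- trivial action: cyclic
      have hu1 : hunit.unit = 1 := orderOf_eq_one_iff.mp (by simpa using hoi)
      have hk1 : ((k : ZMod q)) = 1 := by
        rw [← hunit.unit_spec, hu1, Units.val_one]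
      have hba : b * a * b⁻¹ = a := by rw [hk, pow_eq_of_cast_one ha hk1]
      have hcomm : Commute a b := by
        have h := congrArg (· * b) hba
        simp only [inv_mul_cancel_right] at h
        exact ((commute_iff_eq b a).mpr h).symm
      have hcop : Nat.Coprime (orderOf a) (orderOf b) := by
        rw [ha, hb]
        exact hodd.coprime_two_right.pow_right 2
      have hord : orderOf (a * b) = Nat.card G := by
        rw [hcomm.orderOf_mul_eq_mul_orderOf_of_coprime hcop, ha, hb, hG]
        ring
      have hcyc : IsCyclic G := isCyclic_of_orderOf_eq_card (a * b) hord
      left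
      have e := (zmodCyclicMulEquiv hcyc).symm
      rw [hG] at e
      exact ⟨e⟩
    · -- inversion: C_q ⋊₂ C_4
      have hou : orderOf hunit.unit = 2 := by simpa using hoi
      have hu2 : hunit.unit ^ 2 = 1 := by rw [← hou]; exact pow_orderOf_eq_one _
      have hk2 : ((k : ZMod q)) ^ 2 = 1 := by
        have := congrArg (Units.val) hu2
        push_cast [hunit.unit_spec] at this
        exact this
      have hne1 : ((k : ZMod q)) ≠ 1 := by
        intro h
        have : hunit.unit = 1 := by ext; rw [hunit.unit_spec, h, Units.val_one]
        rw [this, orderOf_one] at hou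
        omega
      rcases sq_eq_one_iff.mp hk2 with h1 | hneg
      · exact absurd h1 hne1
      · refine Or.inr (Or.inr (Or.inr (Or.inl ⟨a, b, ha, hb, ?_, hclos⟩)))
        rw [hk, pow_eq_of_cast_neg_one ha hneg]
    · -- order 4 action: C_q ⋊₄ C_4
      refine Or.inr (Or.inr (Or.inr (Or.inr ⟨a, b, hunit.unit, by simpa using hoi, ha, hb,
        ?_, hclos⟩)))
      rw [hk, ← pow_val_natCast' ha k, hunit.unit_spec]
  · -- Sylow 2 is Klein four
    have hsq : ∀ z : G, z ∈ (P2 : Subgroup G) → z * z = 1 := by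
      intro z hz
      have hdvd : orderOf z ∣ 4 := hP2card ▸ orderOf_dvd_card_subgroup hz
      have hne : orderOf z ≠ 4 := fun h => hb4 ⟨z, h⟩
      obtain ⟨i, hi, hzi⟩ := (Nat.dvd_prime_pow Nat.prime_two).mp
        ((show (4 : ℕ) = 2 ^ 2 by norm_num) ▸ hdvd)
      have hdvd2 : orderOf z ∣ 2 := by
        interval_cases i
        · rw [hzi]; norm_num
        · rw [hzi]; norm_num
        · exfalso; apply hne; rw [hzi]; norm_num
      rw [← pow_two]
      exact orderOf_dvd_iff_pow_eq_one.mp hdvd2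
    -- pick two distinct nontrivial elements
    haveI : Nontrivial ↥(P2 : Subgroup G) :=
      Finite.one_lt_card_iff_nontrivial.mp (by omega)
    obtain ⟨x₀, hx₀⟩ := exists_ne (1 : ↥(P2 : Subgroup G))
    have hy₀ : ∃ y₀ : ↥(P2 : Subgroup G), y₀ ≠ 1 ∧ y₀ ≠ x₀ := by
      by_contra h
      push_neg at h
      have hsub : (Set.univ : Set ↥(P2 : Subgroup G)) ⊆ {1, x₀} := by
        intro z _
        rcases eq_or_ne z 1 with rfl | hz
        · exact Set.mem_insert _ _
        · exact Set.mem_insert_of_mem _ (h z hz)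
      have hle : Nat.card ↥(P2 : Subgroup G) ≤ 2 := by
        rw [← Set.ncard_univ]
        calc (Set.univ : Set ↥(P2 : Subgroup G)).ncard
            ≤ ({1, x₀} : Set ↥(P2 : Subgroup G)).ncard :=
              Set.ncard_le_ncard hsub (Set.toFinite _)
          _ ≤ 2 := by
              calc ({1, x₀} : Set ↥(P2 : Subgroup G)).ncard
                  ≤ ({x₀} : Set _).ncard + 1 := Set.ncard_insert_le _ _
                _ = 2 := by rw [Set.ncard_singleton]
      omega
    obtain ⟨y₀, hy₀1, hy₀x⟩ := hy₀
    set x : G := (x₀ : G) with hxdef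
    set y : G := (y₀ : G) with hydef
    have hxP : x ∈ (P2 : Subgroup G) := x₀.2
    have hyP : y ∈ (P2 : Subgroup G) := y₀.2
    have hx1 : x ≠ 1 := by
      rw [hxdef]
      intro h
      exact hx₀ (Subtype.ext (by simpa using h))
    have hy1 : y ≠ 1 := by
      rw [hydef]
      intro h
      exact hy₀1 (Subtype.ext (by simpa using h))
    have hxy : x ≠ y := fun h => hy₀x (Subtype.coe_injective h.symm)
    have hx2 : x * x = 1 := hsq x hxP
    have hy2 : y * y = 1 := hsq y hyP
    have hxy2 : (x * y) * (x * y) = 1 := hsq _ (mul_mem hxP hyP)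
    have hxinv : x⁻¹ = x := (eq_inv_of_mul_eq_one_left hx2).symm
    have hyinv : y⁻¹ = y := (eq_inv_of_mul_eq_one_left hy2).symm
    have hcomm : x * y = y * x := by
      have h1 : x * y = (x * y)⁻¹ := eq_inv_of_mul_eq_one_left hxy2
      rw [h1, mul_inv_rev, hxinv, hyinv]
    rcases key2 x hx2 with hxa | hxa <;> rcases key2 y hy2 with hya | hya
    · -- abelian: C_q × C_2 × C_2
      have hcax : Commute a x := by
        have h := congrArg (· * x) hxa
        simp only [inv_mul_cancel_right] at h
        exact ((commute_iff_eq x a).mpr h).symm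
      have hcay : Commute a y := by
        have h := congrArg (· * y) hya
        simp only [inv_mul_cancel_right] at h
        exact ((commute_iff_eq y a).mpr h).symm
      have hox : orderOf x = 2 := orderOf_eq_prime (by rw [pow_two]; exact hx2) hx1
      have hoy : orderOf y = 2 := orderOf_eq_prime (by rw [pow_two]; exact hy2) hy1
      have hKcard : Nat.card (closure ({x, y} : Set G)) = 4 :=
        card_pair hP2card hxP hyP hx1 hy1 hxy
      have hgen : closure ({a, x, y} : Set G) = ⊤ := by
        apply closure_top_of_dvd
        rw [hG]
        have h1 : q ∣ Nat.card (closure ({a, x, y} : Set G)) :=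
          ha ▸ orderOf_dvd_card_subgroup (subset_closure (Set.mem_insert a _))
        have h2 : 4 ∣ Nat.card (closure ({a, x, y} : Set G)) := by
          have hle : closure ({x, y} : Set G) ≤ closure ({a, x, y} : Set G) :=
            closure_mono (by intro z hz; exact Set.mem_insert_of_mem _ hz)
          exact hKcard ▸ Subgroup.card_dvd_of_le hle
        exact hco4q.mul_dvd_of_dvd_of_dvd h2 h1
      exact Or.inr (Or.inl (isoProd hq1 ha hox hoy hcax hcay
        ((commute_iff_eq x y).mpr hcomm) hG hgen))
    · -- x commutes, y inverts: dihedral with pair (y, x)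
      refine Or.inr (Or.inr (Or.inl (dihedral_case hq hodd hG ha hx1 hy2 hx2 hcomm.symm
        hya hxa ?_)))
      exact card_pair hP2card hyP hxP hy1 hx1 hxy.symm
    · -- x inverts, y commutes: dihedral with pair (x, y)
      refine Or.inr (Or.inr (Or.inl (dihedral_case hq hodd hG ha hy1 hx2 hy2 hcomm
        hxa hya ?_)))
      exact card_pair hP2card hxP hyP hx1 hy1 hxy
    · -- both invert: dihedral with pair (x, x*y)
      have hxy1 : x * y ≠ 1 := by
        intro h
        have : y = x⁻¹ := eq_inv_of_mul_eq_one_right h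
        rw [hxinv] at this
        exact hxy this.symm
      have hxxy : x ≠ x * y := by
        intro h
        have h2 : (1 : G) = y := by
          have := congrArg (x⁻¹ * ·) h
          simpa [← mul_assoc, hxinv, hx2] using this
        exact hy1 h2.symm
      have hcxy : x * (x * y) = (x * y) * x := by
        rw [mul_assoc, ← hcomm]
      have hxya : (x * y) * a * (x * y)⁻¹ = a := by
        have h1 : (x * y) * a * (x * y)⁻¹ = x * (y * a * y⁻¹) * x⁻¹ := by
          group
        rw [h1, hya]
        have h2 : x * a⁻¹ * x⁻¹ = (x * a * x⁻¹)⁻¹ := by group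
        rw [h2, hxa, inv_inv]
      refine Or.inr (Or.inr (Or.inl (dihedral_case hq hodd hG ha hxy1
        hx2 (hsq _ (mul_mem hxP hyP)) hcxy hxa hxya ?_)))
      exact card_pair hP2card hxP (mul_mem hxP hyP) hx1 hxy1 hxxy
end

section
/- Let q be a prime with q ≡ 1 (mod 4), r a primitive 4th root of unity modulo q, and G = ⟨a,b : a^q=b^4=1, bab^{-1}=a^r⟩. Then the set of elements of order 2 in G is exactly {a^l b^2 : 0 ≤ l ≤ q-1}, and every element of order 4 in G is of the form a^l b or a^l b^3 for some 0 ≤ l ≤ q-1. -/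
/-- In `G = C_q ⋊₄ C_4` (with `q ≡ 1 mod 4` prime and `b` acting on `⟨a⟩` by the power `r`,
`r` of order 4 mod `q`), the elements of order 2 are exactly the `a^l b^2` for
`0 ≤ l ≤ q-1`, and every element of order 4 has the form `a^l b` or `a^l b^3`. -/
theorem stmt_2 (q : ℕ) (hq : q.Prime) (hmod : q % 4 = 1) (r : (ZMod q)ˣ)
    (hr : orderOf r = 4)
    (G : Type) [Group G] (a b : G)
    (ha : orderOf a = q) (hb : orderOf b = 4)
    (hrel : b * a * b⁻¹ = a ^ ((r : ZMod q).val))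
    (hgen : Subgroup.closure {a, b} = ⊤)
    (hcard : Nat.card G = 4 * q) :
    (∀ g : G, orderOf g = 2 ↔ ∃ l, l ≤ q - 1 ∧ g = a ^ l * b ^ 2) ∧
    (∀ g : G, orderOf g = 4 →
      ∃ l, l ≤ q - 1 ∧ (g = a ^ l * b ∨ g = a ^ l * b ^ 3)) := by
  haveI : Fact q.Prime := ⟨hq⟩
  have hq2 : 2 ≤ q := hq.two_le
  have hq5 : 5 ≤ q := by omega
  have hqodd : ¬ (2 ∣ q) := by omega
  have hq4 : ¬ (4 ∣ q) := by omega
  haveI : Finite G := Nat.finite_of_card_ne_zero (by omega)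
  set v : ℕ := (r : ZMod q).val with hv
  have hvcast : ((v : ℕ) : ZMod q) = (r : ZMod q) := by
    rw [hv, ZMod.natCast_val, ZMod.cast_id]
  -- r ^ 2 = -1
  have hr2 : r ^ 2 = -1 := by
    have h4 : r ^ 4 = 1 := by rw [← hr]; exact pow_orderOf_eq_one r
    have hsq : (r ^ 2) * (r ^ 2) = 1 := by rw [← pow_add]; exact h4
    have hne : r ^ 2 ≠ 1 := by
      intro h
      have : orderOf r ∣ 2 := orderOf_dvd_of_pow_eq_one h
      rw [hr] at this; omega
    have hval : ((r ^ 2 : (ZMod q)ˣ) : ZMod q) * ((r ^ 2 : (ZMod q)ˣ) : ZMod q) = 1 := by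
      rw [← Units.val_mul, hsq]; rfl
    rcases mul_self_eq_one_iff.mp hval with h | h
    · exact absurd (Units.ext h) hne
    · ext; rw [h]; rfl
  have apow : ∀ n m : ℕ, ((n : ZMod q) = (m : ZMod q)) → a ^ n = a ^ m := by
    intro n m h
    rw [pow_eq_pow_iff_modEq, ha]
    exact (ZMod.natCast_eq_natCast_iff _ _ _).mp h
  have conj1 : ∀ l : ℕ, b * a ^ l * b⁻¹ = a ^ (v * l) := by
    intro l
    rw [← conj_pow, hrel, ← pow_mul]
  have conjk : ∀ k l : ℕ, b ^ k * a ^ l * (b ^ k)⁻¹ = a ^ (v ^ k * l) := by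
    intro k
    induction k with
    | zero => intro l; simp
    | succ n ih =>
      intro l
      have h1 : b ^ (n + 1) * a ^ l * (b ^ (n + 1))⁻¹
          = b ^ n * (b * a ^ l * b⁻¹) * (b ^ n)⁻¹ := by
        rw [pow_succ]; group
      rw [h1, conj1 l, ih (v * l), ← mul_assoc, ← pow_succ]
  set A := Subgroup.zpowers a with hA
  set B := Subgroup.zpowers b with hB
  -- b⁻¹ * a * b is a power of a
  have hw : ∃ w : ℕ, b⁻¹ * a * b = a ^ w := by
    set w : ℕ := ((r⁻¹ : (ZMod q)ˣ) : ZMod q).val with hwdef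
    refine ⟨w, ?_⟩
    have hcastw : ((v * w : ℕ) : ZMod q) = ((1 : ℕ) : ZMod q) := by
      rw [Nat.cast_mul, Nat.cast_one, hvcast, hwdef, ZMod.natCast_val, ZMod.cast_id,
        ← Units.val_mul, mul_inv_cancel, Units.val_one]
    have h2 : a ^ (v * w) = a ^ 1 := apow _ _ hcastw
    have h1 : b * a ^ w * b⁻¹ = a := by rw [conj1, h2, pow_one]
    have h3 := congrArg (fun x => b⁻¹ * x * b) h1
    simpa [mul_assoc] using h3.symm
  -- A is normal
  have hbnorm : b ∈ Subgroup.normalizer (A : Set G) := by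
    rw [Subgroup.mem_normalizer_iff]
    intro h
    constructor
    · rintro ⟨m, rfl⟩
      refine ⟨(v : ℤ) * m, ?_⟩
      show a ^ ((v : ℤ) * m) = b * a ^ m * b⁻¹
      rw [← conj_zpow, hrel, ← zpow_natCast a v, ← zpow_mul]
    · rintro ⟨m, hm⟩
      have hm' : a ^ m = b * h * b⁻¹ := hm
      obtain ⟨w, hwe⟩ := hw
      have h1 : h = b⁻¹ * a ^ m * b := by rw [hm']; group
      have h2 : b⁻¹ * a ^ m * b = (b⁻¹ * a * b) ^ m := by
        calc b⁻¹ * a ^ m * b = b⁻¹ * a ^ m * (b⁻¹)⁻¹ := by rw [inv_inv]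
          _ = (b⁻¹ * a * (b⁻¹)⁻¹) ^ m := conj_zpow.symm
          _ = (b⁻¹ * a * b) ^ m := by rw [inv_inv]
      refine ⟨(w : ℤ) * m, ?_⟩
      show a ^ ((w : ℤ) * m) = h
      rw [zpow_mul, zpow_natCast, ← hwe, ← h2]
      exact h1.symm
  have hAnorm : A.Normal := by
    rw [← Subgroup.normalizer_eq_top_iff, eq_top_iff, ← hgen, Subgroup.closure_le]
    rintro x hx
    simp only [Set.mem_insert_iff, Set.mem_singleton_iff] at hx
    rcases hx with h | h <;> rw [h]
    · exact Subgroup.le_normalizer (Subgroup.mem_zpowers a)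
    · exact hbnorm
  -- reduce integer powers to natural powers
  have reduce : ∀ (x : G) (n : ℕ), orderOf x = n → 0 < n →
      ∀ (m : ℤ), x ^ m = x ^ ((m % (n : ℤ)).toNat) := by
    intro x n hx hn m
    have h0 : x ^ m = x ^ (m % (n : ℤ)) := by rw [← hx, zpow_mod_orderOf]
    rw [h0, ← zpow_natCast,
      Int.toNat_of_nonneg (Int.emod_nonneg m (by exact_mod_cast hn.ne'))]
  -- decomposition
  have hdecomp : ∀ g : G, ∃ l k : ℕ, l < q ∧ k < 4 ∧ g = a ^ l * b ^ k := by
    intro g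
    have hsup : A ⊔ B = ⊤ := by
      rw [eq_top_iff, ← hgen, Subgroup.closure_le]
      rintro x hx
      simp only [Set.mem_insert_iff, Set.mem_singleton_iff] at hx
      rcases hx with h | h <;> rw [h]
      · exact Subgroup.mem_sup_left (Subgroup.mem_zpowers a)
      · exact Subgroup.mem_sup_right (Subgroup.mem_zpowers b)
    have hg : g ∈ (↑(A ⊔ B) : Set G) := by rw [hsup]; trivial
    rw [Subgroup.normal_mul] at hg
    obtain ⟨x, hx, y, hy, rfl⟩ := hg
    obtain ⟨m, hm⟩ := hx
    obtain ⟨n, hn⟩ := hy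
    have hm' : a ^ m = x := hm
    have hn' : b ^ n = y := hn
    refine ⟨(m % (q : ℤ)).toNat, (n % (4 : ℤ)).toNat, ?_, ?_, ?_⟩
    · have h1 := Int.emod_lt_of_pos m (by exact_mod_cast hq.pos : (0:ℤ) < q)
      have h2 := Int.emod_nonneg m (by exact_mod_cast hq.pos.ne' : (q:ℤ) ≠ 0)
      omega
    · have h1 := Int.emod_lt_of_pos n (by norm_num : (0:ℤ) < 4)
      have h2 := Int.emod_nonneg n (by norm_num : (4:ℤ) ≠ 0)
      omega
    · show x * y = _
      rw [← hm', ← hn', reduce a q ha hq.pos m, reduce b 4 hb (by norm_num) n]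
      norm_num
  -- a ^ m * b ^ 2 ≠ 1
  have hb2 : ∀ m : ℕ, a ^ m * b ^ 2 ≠ 1 := by
    intro m h
    have hmem : b ^ 2 ∈ A := by
      refine ⟨-(m : ℤ), ?_⟩
      show a ^ (-(m : ℤ)) = b ^ 2
      rw [zpow_neg, zpow_natCast]
      exact (eq_inv_of_mul_eq_one_right h).symm
    have hdvd : orderOf (b ^ 2) ∣ q := by
      have h1 : orderOf (⟨b ^ 2, hmem⟩ : A) ∣ Nat.card A := orderOf_dvd_natCard _
      rwa [Subgroup.orderOf_mk, hA, Nat.card_zpowers, ha] at h1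
    have ho : orderOf (b ^ 2) = 2 := by
      rw [orderOf_pow, hb]; decide
    rw [ho] at hdvd
    exact hqodd hdvd
  have h4 : b ^ 4 = 1 := by rw [← hb]; exact pow_orderOf_eq_one b
  -- squares
  have sq : ∀ l k : ℕ, (a ^ l * b ^ k) ^ 2 = a ^ (l + v ^ k * l) * b ^ (2 * k) := by
    intro l k
    have h1 : (a ^ l * b ^ k) ^ 2 = a ^ l * (b ^ k * a ^ l * (b ^ k)⁻¹) * (b ^ k * b ^ k) := by
      simp [pow_two, mul_assoc]
    rw [h1, conjk, ← pow_add, ← pow_add, ← two_mul]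
  have sqk2 : ∀ l : ℕ, (a ^ l * b ^ 2) ^ 2 = 1 := by
    intro l
    rw [sq, show 2 * 2 = 4 from rfl, h4, mul_one]
    have h0 : a ^ (l + v ^ 2 * l) = a ^ 0 := by
      apply apow
      push_cast
      rw [hvcast]
      have hval : ((r : ZMod q)) ^ 2 = -1 := by
        rw [← Units.val_pow_eq_pow_val, hr2]; simp
      rw [hval]; ring
    rw [h0, pow_zero]
  have hback : ∀ l : ℕ, orderOf (a ^ l * b ^ 2) = 2 := by
    intro l
    have : Fact (Nat.Prime 2) := ⟨Nat.prime_two⟩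
    exact orderOf_eq_prime (sqk2 l) (hb2 l)
  constructor
  · intro g
    constructor
    · intro hg
      obtain ⟨l, k, hl, hk, rfl⟩ := hdecomp g
      interval_cases k
      · rw [pow_zero, mul_one] at hg ⊢
        have hd : orderOf (a ^ l) ∣ q := ha ▸ orderOf_pow_dvd l
        rw [hg] at hd
        exact absurd hd hqodd
      · exfalso
        have h2 : (a ^ l * b ^ 1) ^ 2 = 1 := by rw [← hg]; exact pow_orderOf_eq_one _
        rw [sq] at h2
        norm_num at h2
        exact hb2 _ h2
      · exact ⟨l, by omega, rfl⟩
      · exfalso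
        have h2 : (a ^ l * b ^ 3) ^ 2 = 1 := by rw [← hg]; exact pow_orderOf_eq_one _
        rw [sq] at h2
        have h6 : b ^ (2 * 3) = b ^ 2 := by
          rw [show 2 * 3 = 2 + 4 from rfl, pow_add, h4, mul_one]
        rw [h6] at h2
        exact hb2 _ h2
    · rintro ⟨l, _, rfl⟩
      exact hback l
  · intro g hg
    obtain ⟨l, k, hl, hk, rfl⟩ := hdecomp g
    interval_cases k
    · exfalso
      rw [pow_zero, mul_one] at hg
      have hd : orderOf (a ^ l) ∣ q := ha ▸ orderOf_pow_dvd l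
      rw [hg] at hd
      exact hq4 hd
    · exact ⟨l, by omega, Or.inl (by rw [pow_one])⟩
    · exfalso
      rw [hback l] at hg
      omega
    · exact ⟨l, by omega, Or.inr rfl⟩
end

section
/- Let q be a prime with q ≡ 1 (mod 4), r a primitive 4th root of unity modulo q, and G = ⟨a,b : a^q=b^4=1, bab^{-1}=a^r⟩. Then the subgroup of G generated by a and b^2 is isomorphic to the dihedral group of order 2q, it is a proper subgroup of G, and it contains all q involutions of G. In particular, G cannot be generated by elements of order 2. -/
private def dihFun (q : ℕ) {G : Type} [Group G] (a s : G) : DihedralGroup q → G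
  | .r i => a ^ i.val
  | .sr i => s * a ^ i.val

lemma dih_aux {q : ℕ} [NeZero q] (hq1 : 1 < q) (hodd : Odd q) {G : Type} [Group G] {a s : G}
    (ha : orderOf a = q) (hs : s * a * s⁻¹ = a⁻¹) (hso : orderOf s = 2) :
    ∃ f : DihedralGroup q →* G, Function.Injective f ∧
      f.range = Subgroup.closure {a, s} := by
  have hss : s * s = 1 := by
    have := pow_orderOf_eq_one s
    rwa [hso, pow_two] at this
  have hsinv : s⁻¹ = s := by rw [inv_eq_iff_mul_eq_one]; exact hss
  have he : ∀ i j : ZMod q, a ^ (i + j).val = a ^ i.val * a ^ j.val := by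
    intro i j
    rw [← pow_add, ZMod.val_add]
    have h := pow_mod_orderOf a (i.val + j.val)
    rw [ha] at h
    exact h
  have hconj : ∀ n : ℕ, s * a ^ n * s⁻¹ = (a ^ n)⁻¹ := by
    intro n; rw [← conj_pow, hs, inv_pow]
  have hneg : ∀ i : ZMod q, a ^ (-i).val = (a ^ i.val)⁻¹ := by
    intro i
    have h := he (-i) i
    rw [neg_add_cancel] at h
    rw [ZMod.val_zero, pow_zero] at h
    exact eq_inv_of_mul_eq_one_left h.symm
  have hcomm : ∀ i : ZMod q, a ^ i.val * s = s * a ^ (-i).val := by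
    intro i
    rw [hneg]
    rw [← hconj i.val, hsinv]
    rw [← mul_assoc, ← mul_assoc, hss, one_mul]
  refine ⟨MonoidHom.mk' (dihFun q a s) ?_, ?_, ?_⟩
  · rintro (i | i) (j | j)
    · show dihFun q a s (DihedralGroup.r (i + j)) = _
      simp only [dihFun, he]
    · show dihFun q a s (DihedralGroup.sr (j - i)) = _
      simp only [dihFun]
      calc s * a ^ (j - i).val = s * (a ^ (-i).val * a ^ j.val) := by
            rw [show j - i = -i + j by ring, he]
        _ = (s * a ^ (-i).val) * a ^ j.val := by rw [mul_assoc]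
        _ = (a ^ i.val * s) * a ^ j.val := by rw [← hcomm]
        _ = a ^ i.val * (s * a ^ j.val) := by rw [mul_assoc]
    · show dihFun q a s (DihedralGroup.sr (i + j)) = _
      simp only [dihFun, he, mul_assoc]
    · show dihFun q a s (DihedralGroup.r (j - i)) = _
      simp only [dihFun]
      refine Eq.symm ?_
      calc (s * a ^ i.val) * (s * a ^ j.val) = s * ((a ^ i.val * s) * a ^ j.val) := by group
        _ = s * ((s * a ^ (-i).val) * a ^ j.val) := by rw [hcomm]
        _ = (s * s) * (a ^ (-i).val * a ^ j.val) := by group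
        _ = a ^ (-i).val * a ^ j.val := by rw [hss, one_mul]
        _ = a ^ (j - i).val := by rw [show j - i = -i + j by ring, he]
  · rw [injective_iff_map_eq_one]
    rintro (i | i) h
    · change dihFun q a s (DihedralGroup.r i) = 1 at h
      simp only [dihFun] at h
      have hdvd : orderOf a ∣ i.val := orderOf_dvd_of_pow_eq_one h
      rw [ha] at hdvd
      have hlt : i.val < q := ZMod.val_lt i
      have hval0 : i.val = 0 := Nat.eq_zero_of_dvd_of_lt hdvd hlt
      rw [DihedralGroup.one_def]
      congr 1
      exact ZMod.val_injective q (by rw [hval0, ZMod.val_zero])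
    · change dihFun q a s (DihedralGroup.sr i) = 1 at h
      simp only [dihFun] at h
      exfalso
      have hsa : s = (a ^ i.val)⁻¹ := by
        rw [eq_inv_iff_mul_eq_one]; exact h
      have haq : a ^ q = 1 := ha ▸ pow_orderOf_eq_one a
      have hsq : s ^ q = 1 := by
        have hpq : (a ^ i.val) ^ q = 1 := by
          rw [← pow_mul, mul_comm, pow_mul, haq, one_pow]
        rw [hsa, inv_pow, hpq, inv_one]
      have hdvd : orderOf s ∣ q := orderOf_dvd_of_pow_eq_one hsq
      rw [hso] at hdvd
      exact (Nat.not_even_iff_odd.mpr hodd) ((even_iff_two_dvd).mpr hdvd)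
  · apply le_antisymm
    · rintro x ⟨y, rfl⟩
      have haH : a ∈ Subgroup.closure {a, s} :=
        Subgroup.subset_closure (Set.mem_insert a {s})
      have hsH : s ∈ Subgroup.closure {a, s} :=
        Subgroup.subset_closure (Set.mem_insert_of_mem a rfl)
      rcases y with i | i
      · exact pow_mem haH i.val
      · exact mul_mem hsH (pow_mem haH i.val)
    · rw [Subgroup.closure_le]
      intro x hx
      simp only [Set.mem_insert_iff, Set.mem_singleton_iff] at hx
      rcases hx with h | h
      · refine ⟨DihedralGroup.r 1, ?_⟩
        show dihFun q a s (DihedralGroup.r 1) = x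
        simp only [dihFun]
        haveI : Fact (1 < q) := ⟨hq1⟩
        rw [ZMod.val_one, pow_one, h]
      · refine ⟨DihedralGroup.sr 0, ?_⟩
        show dihFun q a s (DihedralGroup.sr 0) = x
        simp only [dihFun, ZMod.val_zero, pow_zero, mul_one]
        exact h.symm

/-- In `G = C_q ⋊₄ C_4`, the subgroup generated by `a` and `b^2` is dihedral of order `2q`,
is proper, and contains all `q` involutions of `G`; in particular `G` is not generated by
its elements of order 2. -/
theorem stmt_3 (q : ℕ) (hq : q.Prime) (hmod : q % 4 = 1) (r : (ZMod q)ˣ)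
    (hr : orderOf r = 4)
    (G : Type) [Group G] (a b : G)
    (ha : orderOf a = q) (hb : orderOf b = 4)
    (hrel : b * a * b⁻¹ = a ^ ((r : ZMod q).val))
    (hgen : Subgroup.closure {a, b} = ⊤)
    (hcard : Nat.card G = 4 * q) :
    Nonempty ((Subgroup.closure {a, b ^ 2} : Subgroup G) ≃* DihedralGroup q) ∧
    Subgroup.closure {a, b ^ 2} ≠ (⊤ : Subgroup G) ∧
    Nat.card {g : G // orderOf g = 2} = q ∧
    (∀ g : G, orderOf g = 2 → g ∈ Subgroup.closure {a, b ^ 2}) ∧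
    Subgroup.closure {g : G | orderOf g = 2} ≠ ⊤ := by
  haveI : Fact q.Prime := ⟨hq⟩
  have hq1 : 1 < q := hq.one_lt
  have hq0 : q ≠ 0 := hq.pos.ne'
  haveI : NeZero q := ⟨hq0⟩
  have hodd : Odd q := by
    rcases hq.eq_two_or_odd' with h | h
    · omega
    · exact h
  haveI : Finite G := Nat.finite_of_card_ne_zero (by rw [hcard]; positivity)
  set k : ℕ := ((r : ZMod q)).val with hkdef
  -- r^2 = -1 in ZMod q
  have hr2 : ((r : ZMod q)) ^ 2 = -1 := by
    have h4 : ((r : ZMod q)) ^ 4 = 1 := by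
      have h := pow_orderOf_eq_one r
      rw [hr] at h
      calc ((r : ZMod q)) ^ 4 = ((r ^ 4 : (ZMod q)ˣ) : ZMod q) := by push_cast; ring
        _ = 1 := by rw [h]; rfl
    have hsq : ((r : ZMod q)) ^ 2 * ((r : ZMod q)) ^ 2 = 1 := by
      rw [← pow_add]; exact h4
    rcases mul_self_eq_one_iff.mp hsq with h1 | h1
    · exfalso
      have hru : r ^ 2 = 1 := by
        ext
        push_cast
        exact h1
      have := orderOf_dvd_of_pow_eq_one hru
      rw [hr] at this
      omega
    · exact h1
  have hkr : ((k : ZMod q)) = (r : ZMod q) := by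
    rw [hkdef, ZMod.natCast_val, ZMod.cast_id]
  have hk2 : q ∣ k * k + 1 := by
    have h0 : ((k * k + 1 : ℕ) : ZMod q) = 0 := by
      push_cast
      rw [hkr]
      rw [show (r : ZMod q) * (r : ZMod q) = ((r : ZMod q)) ^ 2 by ring, hr2]
      ring
    exact (ZMod.natCast_eq_zero_iff _ _).mp h0
  have haq : a ^ q = 1 := ha ▸ pow_orderOf_eq_one a
  have hb4 : b ^ 4 = 1 := hb ▸ pow_orderOf_eq_one b
  have hconjn : ∀ n : ℕ, b * a ^ n * b⁻¹ = a ^ (k * n) := by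
    intro n
    rw [← conj_pow, hrel, ← pow_mul, mul_comm]
  -- s := b^2 inverts a
  have hs : b ^ 2 * a * (b ^ 2)⁻¹ = a⁻¹ := by
    have h1 : b ^ 2 * a * (b ^ 2)⁻¹ = b * (b * a * b⁻¹) * b⁻¹ := by
      rw [pow_two, mul_inv_rev]
      simp only [mul_assoc]
    rw [hrel, hconjn k] at h1
    have h2 : a ^ (k * k + 1) = 1 :=
      orderOf_dvd_iff_pow_eq_one.mp (by rw [ha]; exact hk2)
    rw [pow_succ] at h2
    rw [h1]
    exact eq_inv_of_mul_eq_one_left h2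
  have hso : orderOf (b ^ 2) = 2 := by
    rw [orderOf_pow, hb]
    decide
  have hssq : b ^ 2 * b ^ 2 = 1 := by
    have := pow_orderOf_eq_one (b ^ 2)
    rwa [hso, pow_two] at this
  have hconjs : ∀ n : ℕ, b ^ 2 * a ^ n * (b ^ 2)⁻¹ = (a ^ n)⁻¹ := by
    intro n; rw [← conj_pow, hs, inv_pow]
  -- b^2 is not a power of a
  have hs_not_pow : ∀ m : ℤ, b ^ 2 ≠ a ^ m := by
    intro m hm
    have hq' : (b ^ 2) ^ q = 1 := by
      rw [hm, ← zpow_natCast, ← zpow_mul, mul_comm, zpow_mul, zpow_natCast, haq, one_zpow]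
    have hdvd := orderOf_dvd_of_pow_eq_one hq'
    rw [hso] at hdvd
    exact (Nat.not_even_iff_odd.mpr hodd) ((even_iff_two_dvd).mpr hdvd)
  -- the dihedral subgroup
  obtain ⟨f, hfinj, hfr⟩ := dih_aux hq1 hodd ha hs hso
  set H := Subgroup.closure {a, b ^ 2} with hHdef
  have hiso : Nonempty ((H : Subgroup G) ≃* DihedralGroup q) :=
    ⟨(MulEquiv.subgroupCongr hfr.symm).trans (MonoidHom.ofInjective hfinj).symm⟩
  have hcardH : Nat.card H = 2 * q := by
    rw [Nat.card_congr hiso.some.toEquiv, Nat.card_eq_fintype_card, DihedralGroup.card]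
  have hHtop : H ≠ ⊤ := by
    intro h
    have : Nat.card H = 4 * q := by rw [h, Subgroup.card_top, hcard]
    omega
  -- N := <a> is normal
  set N := Subgroup.zpowers a with hNdef
  have hNcard : Nat.card N = q := by rw [hNdef, Nat.card_zpowers, ha]
  have hak_ord : orderOf (a ^ k) = q := by
    rw [orderOf_pow, ha]
    have hk0 : k ≠ 0 := by
      intro h0
      have : (r : ZMod q) = 0 := by
        rw [← hkr, h0]
        exact Nat.cast_zero
      exact r.ne_zero this
    have hklt : k < q := ZMod.val_lt _
    have hnd : ¬ q ∣ k := fun hd => hk0 (Nat.eq_zero_of_dvd_of_lt hd hklt)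
    rw [hq.coprime_iff_not_dvd.mpr hnd]
    exact Nat.div_one q
  have hmapN : Subgroup.map (MulAut.conj b).toMonoidHom N = N := by
    rw [hNdef, MonoidHom.map_zpowers]
    have hconja : (MulAut.conj b).toMonoidHom a = a ^ k := by
      simp only [MulEquiv.coe_toMonoidHom, MulAut.conj_apply]
      exact hrel
    rw [hconja]
    have hle : Subgroup.zpowers (a ^ k) ≤ Subgroup.zpowers a := by
      rw [Subgroup.zpowers_le]
      exact Subgroup.mem_zpowers_iff.mpr ⟨(k : ℤ), zpow_natCast a k⟩
    refine Subgroup.eq_of_le_of_card_ge hle ?_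
    rw [Nat.card_zpowers, Nat.card_zpowers, ha, hak_ord]
  haveI hNnormal : N.Normal := by
    rw [← Subgroup.normalizer_eq_top_iff, ← top_le_iff, ← hgen, Subgroup.closure_le]
    rintro x (rfl | rfl)
    · exact Subgroup.le_normalizer (Subgroup.mem_zpowers x)
    · rw [SetLike.mem_coe, Subgroup.mem_normalizer_iff]
      intro h
      constructor
      · intro hh
        rw [← hmapN]
        exact ⟨h, hh, rfl⟩
      · intro hh
        rw [← hmapN] at hh
        obtain ⟨n, hn, hn2⟩ := hh
        have hn3 : x * n * x⁻¹ = x * h * x⁻¹ := by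
          simpa only [MulEquiv.coe_toMonoidHom, MulAut.conj_apply] using hn2
        have hnh : n = h := mul_left_cancel (mul_right_cancel hn3)
        rwa [← hnh]
  -- the quotient has order 4 and is generated by the image of b
  have hQcard : Nat.card (G ⧸ N) = 4 := by
    have h := Subgroup.card_eq_card_quotient_mul_card_subgroup N
    rw [hcard, hNcard] at h
    have h2 := Nat.eq_of_mul_eq_mul_right hq.pos h
    omega
  have hπa : ((a : G) : G ⧸ N) = 1 := (QuotientGroup.eq_one_iff a).mpr (Subgroup.mem_zpowers a)
  have hπbtop : Subgroup.zpowers ((b : G) : G ⧸ N) = ⊤ := by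
    have hmt := Subgroup.map_top_of_surjective (QuotientGroup.mk' N) (QuotientGroup.mk'_surjective N)
    rw [← hgen, MonoidHom.map_closure] at hmt
    have himg : (QuotientGroup.mk' N) '' {a, b} = {((a : G) : G ⧸ N), ((b : G) : G ⧸ N)} := by
      rw [Set.image_insert_eq, Set.image_singleton]
      rfl
    rw [himg] at hmt
    rw [Subgroup.zpowers_eq_closure, ← hmt]
    apply le_antisymm
    · exact Subgroup.closure_mono (by intro x hx; right; exact hx)
    · rw [Subgroup.closure_le]
      rintro x (rfl | rfl)
      · rw [hπa]; exact one_mem _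
      · exact Subgroup.subset_closure rfl
  have hπb4 : orderOf ((b : G) : G ⧸ N) = 4 := by
    rw [← Nat.card_zpowers, hπbtop, Subgroup.card_top, hQcard]
  -- every involution has the form a^i * b^2
  have hkey : ∀ g : G, orderOf g = 2 → ∃ i : ZMod q, g = a ^ i.val * b ^ 2 := by
    intro g hg
    have hg2 : g ^ 2 = 1 := hg ▸ pow_orderOf_eq_one g
    have hπg : ((g : G) : G ⧸ N) ∈ Subgroup.zpowers ((b : G) : G ⧸ N) := by
      rw [hπbtop]; trivial
    obtain ⟨m, hm⟩ := Subgroup.mem_zpowers_iff.mp hπg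
    have hπg2 : ((b : G) : G ⧸ N) ^ (2 * m) = 1 := by
      rw [mul_comm, zpow_mul, hm]
      rw [show (2 : ℤ) = ((2 : ℕ) : ℤ) from rfl, zpow_natCast]
      rw [show ((g : G) : G ⧸ N) ^ (2 : ℕ) = ((g ^ 2 : G) : G ⧸ N) from
        (map_pow (QuotientGroup.mk' N) g 2).symm]
      rw [hg2]
      rfl
    have h4dvd : ((4 : ℕ) : ℤ) ∣ 2 * m := by
      have hdd := orderOf_dvd_iff_zpow_eq_one.mpr hπg2
      rwa [hπb4] at hdd
    obtain ⟨t, ht⟩ : ∃ t : ℤ, m = 2 * t := by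
      obtain ⟨c, hc⟩ := h4dvd
      exact ⟨c, by push_cast at hc; omega⟩
    have hπgs : ((g : G) : G ⧸ N) = ((b ^ 2 : G) : G ⧸ N) ^ t := by
      rw [← hm, ht, zpow_mul]
      congr 1
      rw [show (2 : ℤ) = ((2 : ℕ) : ℤ) from rfl, zpow_natCast]
      exact (map_pow (QuotientGroup.mk' N) b 2).symm
    have hmem : g * ((b ^ 2) ^ t)⁻¹ ∈ N := by
      rw [← QuotientGroup.eq_one_iff]
      have hcast : ((g * ((b ^ 2) ^ t)⁻¹ : G) : G ⧸ N)
          = ((g : G) : G ⧸ N) * (((b ^ 2 : G) : G ⧸ N) ^ t)⁻¹ := by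
        rw [show ((g * ((b ^ 2) ^ t)⁻¹ : G) : G ⧸ N)
            = (QuotientGroup.mk' N) (g * ((b ^ 2) ^ t)⁻¹) from rfl]
        rw [map_mul, map_inv, map_zpow]
        rfl
      rw [hcast, hπgs, mul_inv_cancel]
    obtain ⟨m', hm'⟩ := Subgroup.mem_zpowers_iff.mp hmem
    have hgeq : g = a ^ m' * (b ^ 2) ^ t := by
      rw [hm']; group
    have hbt : (b ^ 2) ^ t = (b ^ 2) ^ (t % 2) := by
      have hz := zpow_mod_orderOf (b ^ 2) t
      rw [hso] at hz
      exact hz.symm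
    rcases Int.emod_two_eq t with h2 | h2
    · exfalso
      rw [hbt, h2, zpow_zero, mul_one] at hgeq
      have hgq : g ^ q = 1 := by
        rw [hgeq, ← zpow_natCast, ← zpow_mul, mul_comm, zpow_mul, zpow_natCast, haq, one_zpow]
      have hdvd := orderOf_dvd_of_pow_eq_one hgq
      rw [hg] at hdvd
      exact (Nat.not_even_iff_odd.mpr hodd) ((even_iff_two_dvd).mpr hdvd)
    · refine ⟨(m' : ZMod q), ?_⟩
      rw [hbt, h2, zpow_one] at hgeq
      have hzm := zpow_mod_orderOf a m'
      rw [ha] at hzm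
      have hval : a ^ (((m' : ZMod q)).val) = a ^ m' := by
        rw [← zpow_natCast, ZMod.val_intCast]
        exact hzm
      rw [hgeq, ← hval]
  -- each a^n * b^2 is an involution
  have hinv : ∀ n : ℕ, orderOf (a ^ n * b ^ 2) = 2 := by
    intro n
    haveI : Fact (Nat.Prime 2) := ⟨Nat.prime_two⟩
    apply orderOf_eq_prime
    · calc (a ^ n * b ^ 2) ^ 2
          = a ^ n * (b ^ 2 * a ^ n * (b ^ 2)⁻¹) * (b ^ 2 * b ^ 2) := by
            rw [pow_two]
            simp only [mul_assoc, inv_mul_cancel_left]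
        _ = a ^ n * (a ^ n)⁻¹ * 1 := by rw [hconjs n, hssq]
        _ = 1 := by group
    · intro h1
      apply hs_not_pow (-(n : ℤ))
      rw [zpow_neg, zpow_natCast]
      exact eq_inv_of_mul_eq_one_right h1
  -- the count of involutions
  have hcount : Nat.card {g : G // orderOf g = 2} = q := by
    have hbij : Function.Bijective (fun i : ZMod q =>
        (⟨a ^ i.val * b ^ 2, hinv i.val⟩ : {g : G // orderOf g = 2})) := by
      constructor
      · intro i j hij
        have h1 : a ^ i.val * b ^ 2 = a ^ j.val * b ^ 2 := congrArg Subtype.val hij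
        have h2 : a ^ i.val = a ^ j.val := mul_right_cancel h1
        have h3 : i.val ≡ j.val [MOD q] := by
          have h4 := pow_eq_pow_iff_modEq.mp h2
          rwa [ha] at h4
        apply ZMod.val_injective
        have h4 := h3
        unfold Nat.ModEq at h4
        rwa [Nat.mod_eq_of_lt (ZMod.val_lt i), Nat.mod_eq_of_lt (ZMod.val_lt j)] at h4
      · rintro ⟨g, hg⟩
        obtain ⟨i, hi⟩ := hkey g hg
        exact ⟨i, Subtype.ext hi.symm⟩
    rw [← Nat.card_congr (Equiv.ofBijective _ hbij), Nat.card_eq_fintype_card, ZMod.card]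
  -- all involutions lie in H
  have hmem2 : ∀ g : G, orderOf g = 2 → g ∈ H := by
    intro g hg
    obtain ⟨i, rfl⟩ := hkey g hg
    exact mul_mem (pow_mem (Subgroup.subset_closure (Set.mem_insert _ _)) _)
      (Subgroup.subset_closure (Set.mem_insert_of_mem _ rfl))
  refine ⟨hiso, hHtop, hcount, hmem2, ?_⟩
  intro htop
  apply hHtop
  have hle : Subgroup.closure {g : G | orderOf g = 2} ≤ H :=
    (Subgroup.closure_le _).mpr (fun g hg => hmem2 g hg)
  rw [htop] at hle
  exact top_unique hle
end

section
/- Let q be an odd prime and D = ⟨r,s : r^{2q}=s^2=(sr)^2=1⟩ the dihedral group of order 4q. There exist five involutions g_1,...,g_5 ∈ D with g_1 g_2 g_3 g_4 g_5 = 1 that generate D; explicitly one may take g_1 = s, g_2 = s, g_3 = s r^{q+1}, g_4 = s r, g_5 = r^q. -/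
open DihedralGroup

/-- In the dihedral group of order `4q` (`q` an odd prime) there are five involutions with
product 1 generating the group: `s, s, s r^{q+1}, s r, r^q`. -/
theorem stmt_6 (q : ℕ) (hq : q.Prime) (hodd : Odd q) :
    ∃ g : Fin 5 → DihedralGroup (2 * q),
      (∀ i, orderOf (g i) = 2) ∧
      g 0 * g 1 * g 2 * g 3 * g 4 = 1 ∧
      Subgroup.closure (Set.range g) = ⊤ ∧
      g 0 = DihedralGroup.sr 0 ∧ g 1 = DihedralGroup.sr 0 ∧
      g 2 = DihedralGroup.sr ((q : ZMod (2 * q)) + 1) ∧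
      g 3 = DihedralGroup.sr 1 ∧ g 4 = DihedralGroup.r (q : ZMod (2 * q)) := by
  have hq0 : 0 < q := hq.pos
  have hne : NeZero (2 * q) := ⟨by positivity⟩
  refine ⟨![sr 0, sr 0, sr ((q : ZMod (2 * q)) + 1), sr 1, r (q : ZMod (2 * q))], ?_, ?_, ?_,
    rfl, rfl, rfl, rfl, rfl⟩
  · intro i
    fin_cases i <;> simp only [Matrix.cons_val_zero, Matrix.cons_val_one, Matrix.head_cons, Matrix.cons_val_succ,
      Matrix.cons_val_two, Matrix.tail_cons, Matrix.cons_val_three, Matrix.cons_val_four]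
    any_goals exact orderOf_sr _
    show orderOf (r (q : ZMod (2 * q))) = 2
    rw [orderOf_r]
    have hval : ((q : ZMod (2 * q))).val = q := by
      rw [ZMod.val_natCast_of_lt]; omega
    rw [hval, Nat.gcd_comm, Nat.gcd_eq_left (dvd_mul_left q 2)]
    exact Nat.mul_div_cancel 2 hq0
  · show sr 0 * sr 0 * sr _ * sr 1 * r _ = 1
    rw [sr_mul_sr, r_mul_sr, sr_mul_sr, r_mul_r]
    have : (1 : ZMod (2 * q)) - ((q : ZMod (2 * q)) + 1 - (0 - 0)) + q = 0 := by ring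
    rw [this, one_def]
  · rw [eq_top_iff]
    rintro x -
    have h0 : sr 0 ∈ Subgroup.closure (Set.range ![sr (0 : ZMod (2*q)), sr 0,
        sr ((q : ZMod (2 * q)) + 1), sr 1, r (q : ZMod (2 * q))]) :=
      Subgroup.subset_closure ⟨0, rfl⟩
    have h1 : sr 1 ∈ Subgroup.closure (Set.range ![sr (0 : ZMod (2*q)), sr 0,
        sr ((q : ZMod (2 * q)) + 1), sr 1, r (q : ZMod (2 * q))]) :=
      Subgroup.subset_closure ⟨3, rfl⟩
    have hr1 : r 1 ∈ Subgroup.closure (Set.range ![sr (0 : ZMod (2*q)), sr 0,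
        sr ((q : ZMod (2 * q)) + 1), sr 1, r (q : ZMod (2 * q))]) := by
      have := mul_mem h0 h1
      rwa [sr_mul_sr, sub_zero] at this
    have hri : ∀ i : ZMod (2 * q), r i ∈ Subgroup.closure (Set.range ![sr (0 : ZMod (2*q)), sr 0,
        sr ((q : ZMod (2 * q)) + 1), sr 1, r (q : ZMod (2 * q))]) := by
      intro i
      have := pow_mem hr1 i.val
      rwa [r_one_pow, ZMod.natCast_val, ZMod.cast_id] at this
    cases x with
    | r i => exact hri i
    | sr i =>
      have := mul_mem h0 (hri i)
      rwa [sr_mul_r, zero_add] at this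
end

section
/- Let q be a prime with q ≡ 1 (mod 4), r ∈ (Z/qZ)^× of order 4, and G = ⟨a,b : a^q=b^4=1, bab^{-1}=a^r⟩. Then the elements x_1 = b^2, x_2 = ab^2, x_3 = ab, x_4 = b^3 generate G, satisfy x_1 x_2 x_3 x_4 = 1, and have orders 2, 2, 4, 4 respectively. -/
/-- In `G = C_q ⋊₄ C_4`, the elements `b^2, a b^2, a b, b^3` generate `G`, have product 1,
and have orders 2, 2, 4, 4 respectively. -/
theorem stmt_7 (q : ℕ) (hq : q.Prime) (hmod : q % 4 = 1) (r : (ZMod q)ˣ)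
    (hr : orderOf r = 4)
    (G : Type) [Group G] (a b : G)
    (ha : orderOf a = q) (hb : orderOf b = 4)
    (hrel : b * a * b⁻¹ = a ^ ((r : ZMod q).val))
    (hgen : Subgroup.closure {a, b} = ⊤)
    (hcard : Nat.card G = 4 * q) :
    Subgroup.closure {b ^ 2, a * b ^ 2, a * b, b ^ 3} = (⊤ : Subgroup G) ∧
    b ^ 2 * (a * b ^ 2) * (a * b) * b ^ 3 = 1 ∧
    orderOf (b ^ 2) = 2 ∧ orderOf (a * b ^ 2) = 2 ∧
    orderOf (a * b) = 4 ∧ orderOf (b ^ 3) = 4 := by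
  haveI : Fact q.Prime := ⟨hq⟩
  obtain ⟨k, hk⟩ : ∃ k, ((r : ZMod q)).val = k := ⟨_, rfl⟩
  rw [hk] at hrel
  have hq2 : q ≠ 2 := by omega
  have hkcast : ((k : ZMod q)) = (r : ZMod q) := by
    rw [← hk]; simp [ZMod.natCast_val, ZMod.cast_id]
  -- r^4 = 1 and r^2 ≠ 1 in ZMod q
  have h4 : (r : ZMod q) ^ 4 = 1 := by
    have h : r ^ 4 = 1 := by rw [← hr]; exact pow_orderOf_eq_one r
    have := congrArg (Units.val) h
    push_cast at this
    exact this
  have h2ne : (r : ZMod q) ^ 2 ≠ 1 := by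
    intro h
    have h' : r ^ 2 = 1 := Units.ext (by push_cast; exact h)
    have := orderOf_dvd_of_pow_eq_one h'
    rw [hr] at this
    norm_num at this
  have hr2 : (r : ZMod q) ^ 2 = -1 := by
    have hz : ((r : ZMod q) ^ 2 - 1) * ((r : ZMod q) ^ 2 + 1) = 0 := by
      linear_combination h4
    rcases mul_eq_zero.mp hz with h | h
    · exact absurd (sub_eq_zero.mp h) h2ne
    · exact eq_neg_of_add_eq_zero_left h
  have hdvd : q ∣ k * k + 1 := by
    have : ((k * k + 1 : ℕ) : ZMod q) = 0 := by
      push_cast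
      rw [hkcast]
      linear_combination hr2
    exact (ZMod.natCast_eq_zero_iff _ _).mp this
  have hb4 : b ^ 4 = 1 := by rw [← hb]; exact pow_orderOf_eq_one b
  have hkey : a ^ (k * k + 1) = 1 := by
    apply orderOf_dvd_iff_pow_eq_one.mp
    rw [ha]; exact hdvd
  have hbinv : b⁻¹ = b ^ 3 := by
    apply inv_eq_of_mul_eq_one_left
    calc b ^ 3 * b = b ^ 4 := by simp [pow_succ, mul_assoc]
    _ = 1 := hb4
  -- conjugation by b^2
  have hc2 : b ^ 2 * a * b ^ 2 = a ^ (k * k) := by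
    have e1 : b ^ 2 * a * b ^ 2 = b * (b * a * b⁻¹) * b⁻¹ * b ^ 4 := by simp [pow_succ, mul_assoc]
    rw [e1, hrel, hb4, mul_one]
    calc b * a ^ k * b⁻¹ = (b * a * b⁻¹) ^ k := (conj_pow).symm
    _ = (a ^ k) ^ k := by rw [hrel]
    _ = a ^ (k * k) := by rw [← pow_mul]
  -- conjugation of powers by b^2
  have hc2n : ∀ n : ℕ, b ^ 2 * a ^ n * b ^ 2 = a ^ (k * k * n) := by
    intro n
    have e2 : (b ^ 2)⁻¹ = b ^ 2 := by
      apply inv_eq_of_mul_eq_one_left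
      calc b ^ 2 * b ^ 2 = b ^ 4 := by simp [pow_succ, mul_assoc]
      _ = 1 := hb4
    calc b ^ 2 * a ^ n * b ^ 2 = b ^ 2 * a ^ n * (b ^ 2)⁻¹ := by rw [e2]
    _ = (b ^ 2 * a * (b ^ 2)⁻¹) ^ n := (conj_pow).symm
    _ = (b ^ 2 * a * b ^ 2) ^ n := by rw [e2]
    _ = (a ^ (k * k)) ^ n := by rw [hc2]
    _ = a ^ (k * k * n) := by rw [← pow_mul]
  -- generation
  have m1 : b ^ 2 ∈ Subgroup.closure {b ^ 2, a * b ^ 2, a * b, b ^ 3} :=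
    Subgroup.subset_closure (by simp)
  have m2 : a * b ^ 2 ∈ Subgroup.closure {b ^ 2, a * b ^ 2, a * b, b ^ 3} :=
    Subgroup.subset_closure (by simp)
  have m3 : a * b ∈ Subgroup.closure {b ^ 2, a * b ^ 2, a * b, b ^ 3} :=
    Subgroup.subset_closure (by simp)
  have ha' : a ∈ Subgroup.closure {b ^ 2, a * b ^ 2, a * b, b ^ 3} := by
    simpa using mul_mem m2 (inv_mem m1)
  have hbmem : b ∈ Subgroup.closure {b ^ 2, a * b ^ 2, a * b, b ^ 3} := by
    simpa using mul_mem (inv_mem ha') m3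
  have hgen' : Subgroup.closure {b ^ 2, a * b ^ 2, a * b, b ^ 3} = (⊤ : Subgroup G) := by
    rw [eq_top_iff, ← hgen, Subgroup.closure_le]
    rintro x (rfl | rfl)
    · exact ha'
    · exact hbmem
  refine ⟨hgen', ?_, ?_, ?_, ?_, ?_⟩
  · -- product is 1
    calc b ^ 2 * (a * b ^ 2) * (a * b) * b ^ 3
        = (b ^ 2 * a * b ^ 2) * a * b ^ 4 := by simp [pow_succ, mul_assoc]
    _ = a ^ (k * k) * a * 1 := by rw [hc2, hb4]
    _ = a ^ (k * k + 1) := by rw [mul_one, ← pow_succ]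
    _ = 1 := hkey
  · -- order of b^2 is 2
    apply orderOf_eq_prime
    · calc (b ^ 2) ^ 2 = b ^ 4 := by simp [pow_succ, mul_assoc]
      _ = 1 := hb4
    · intro h
      have := orderOf_dvd_of_pow_eq_one h
      rw [hb] at this
      norm_num at this
  · -- order of a*b^2 is 2
    apply orderOf_eq_prime
    · calc (a * b ^ 2) ^ 2 = a * (b ^ 2 * a * b ^ 2) := by simp [pow_succ, mul_assoc]
      _ = a * a ^ (k * k) := by rw [hc2]
      _ = a ^ (k * k + 1) := by rw [← pow_succ']
      _ = 1 := hkey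
    · intro h
      have haeq : a ^ 2 = 1 := by
        have hab : a = (b ^ 2)⁻¹ := eq_inv_of_mul_eq_one_left (by rw [← h])
        rw [hab]
        calc ((b ^ 2)⁻¹) ^ 2 = (b ^ 4)⁻¹ := by simp [pow_succ, mul_assoc]
        _ = 1 := by rw [hb4]; simp
      have := orderOf_dvd_of_pow_eq_one haeq
      rw [ha] at this
      have := Nat.le_of_dvd (by norm_num) this
      have := hq.two_le
      omega
  · -- order of a*b is 4
    have habsq : (a * b) ^ 2 = a ^ (k + 1) * b ^ 2 := by
      calc (a * b) ^ 2 = a * (b * a * b⁻¹) * b ^ 2 := by simp [pow_succ, mul_assoc]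
      _ = a * a ^ k * b ^ 2 := by rw [hrel]
      _ = a ^ (k + 1) * b ^ 2 := by rw [← pow_succ']
    have hab4 : (a * b) ^ 4 = 1 := by
      have e : (a * b) ^ 4 = (a * b) ^ 2 * (a * b) ^ 2 := by simp [pow_succ, mul_assoc]
      rw [e, habsq]
      calc a ^ (k + 1) * b ^ 2 * (a ^ (k + 1) * b ^ 2)
          = a ^ (k + 1) * (b ^ 2 * a ^ (k + 1) * b ^ 2) := by simp [pow_succ, mul_assoc]
      _ = a ^ (k + 1) * a ^ (k * k * (k + 1)) := by rw [hc2n]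
      _ = a ^ ((k + 1) + k * k * (k + 1)) := by rw [← pow_add]
      _ = (a ^ (k * k + 1)) ^ (k + 1) := by rw [← pow_mul]; ring_nf
      _ = 1 := by rw [hkey, one_pow]
    have hab2 : (a * b) ^ 2 ≠ 1 := by
      rw [habsq]
      intro h
      have hbeq : b ^ 2 = (a ^ (k + 1))⁻¹ := eq_inv_of_mul_eq_one_right h
      have h2 : a ^ (2 * (k + 1)) = 1 := by
        have : (a ^ (k + 1)) * (a ^ (k + 1)) = (b ^ 2)⁻¹ * (b ^ 2)⁻¹ := by
          rw [hbeq]; simp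
        calc a ^ (2 * (k + 1)) = (a ^ (k + 1)) * (a ^ (k + 1)) := by
              rw [← pow_add]; ring_nf
        _ = (b ^ 2)⁻¹ * (b ^ 2)⁻¹ := this
        _ = (b ^ 4)⁻¹ := by simp [pow_succ, mul_assoc]
        _ = 1 := by rw [hb4]; simp
      have hdvd2 : q ∣ 2 * (k + 1) := by
        rw [← ha]; exact orderOf_dvd_of_pow_eq_one h2
      have hq_dvd : q ∣ k + 1 := by
        rcases (Nat.Prime.dvd_mul hq).mp hdvd2 with h' | h'
        · have := Nat.le_of_dvd (by norm_num) h'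
          have := hq.two_le
          omega
        · exact h'
      have : ((k + 1 : ℕ) : ZMod q) = 0 := (ZMod.natCast_eq_zero_iff _ _).mpr hq_dvd
      push_cast at this
      rw [hkcast] at this
      apply h2ne
      have hrneg : (r : ZMod q) = -1 := eq_neg_of_add_eq_zero_left this
      rw [hrneg]; ring
    have : orderOf (a * b) = 2 ^ 2 :=
      orderOf_eq_prime_pow (by simpa using hab2) (by simpa using hab4)
    simpa using this
  · -- order of b^3 is 4
    have h1 : (b ^ 3) ^ 4 = 1 := by
      calc (b ^ 3) ^ 4 = (b ^ 4) ^ 3 := by simp [pow_succ, mul_assoc]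
      _ = 1 := by rw [hb4]; simp
    have h2 : (b ^ 3) ^ 2 ≠ 1 := by
      intro h
      have : b ^ 2 = 1 := by
        calc b ^ 2 = (b ^ 3) ^ 2 * (b ^ 4)⁻¹ := by simp [pow_succ, mul_assoc]
        _ = 1 := by rw [h, hb4]; simp
      have := orderOf_dvd_of_pow_eq_one this
      rw [hb] at this
      norm_num at this
    have : orderOf (b ^ 3) = 2 ^ 2 :=
      orderOf_eq_prime_pow (by simpa using h2) (by simpa using h1)
    simpa using this
end

section
/- Let q ≥ 3 be odd and let G = ⟨a,b : a^q=b^4=1, bab^{-1}=a^{-1}⟩. There do not exist elements x_1, x_2, x_3, x_4 ∈ G with x_1^2 = x_2^2 = x_3^4 = x_4^4 = 1, x_1 x_2 x_3 x_4 = 1 (with x_3, x_4 of order exactly 4 and x_1, x_2 of order exactly 2) that generate G. -/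
/-- In `G = C_q ⋊₂ C_4` (`q ≥ 3` odd, `C_4` acting by inversion) there are no generators
`x₁, x₂, x₃, x₄` of orders 2, 2, 4, 4 with `x₁ x₂ x₃ x₄ = 1`. -/
theorem stmt_8 (q : ℕ) (hq3 : 3 ≤ q) (hodd : Odd q)
    (G : Type) [Group G] (a b : G)
    (ha : orderOf a = q) (hb : orderOf b = 4)
    (hrel : b * a * b⁻¹ = a⁻¹)
    (hgen : Subgroup.closure {a, b} = ⊤)
    (hcard : Nat.card G = 4 * q) :
    ¬ ∃ x₁ x₂ x₃ x₄ : G, orderOf x₁ = 2 ∧ orderOf x₂ = 2 ∧ orderOf x₃ = 4 ∧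
      orderOf x₄ = 4 ∧ x₁ * x₂ * x₃ * x₄ = 1 ∧
      Subgroup.closure {x₁, x₂, x₃, x₄} = ⊤ := by
  rintro ⟨x₁, x₂, x₃, x₄, h1, h2, h3, h4, hprod, hclos⟩
  -- conjugation lemmas
  have hrelinv : b⁻¹ * a⁻¹ * b = a := by rw [← hrel]; group
  have hrel2 : b⁻¹ * a * b = a⁻¹ := by
    have h2 := congrArg Inv.inv hrelinv
    simp only [mul_inv_rev, inv_inv] at h2
    rw [mul_assoc]
    simpa [mul_assoc] using h2
  have hc : ∀ i : ℤ, b * a ^ i * b⁻¹ = a ^ (-i) := by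
    intro i
    have h := map_zpow (MulAut.conj b) a i
    simp only [MulAut.conj_apply] at h
    rw [h, hrel, inv_zpow, ← zpow_neg]
  have hc2 : ∀ i : ℤ, b⁻¹ * a ^ i * b = a ^ (-i) := by
    intro i
    have h := map_zpow (MulAut.conj b⁻¹) a i
    simp only [MulAut.conj_apply, inv_inv] at h
    rw [h, hrel2, inv_zpow, ← zpow_neg]
  have hL : ∀ i : ℤ, a ^ i * b = b * a ^ (-i) := by
    intro i
    calc a ^ i * b = b * (b⁻¹ * a ^ i * b) := by group
      _ = b * a ^ (-i) := by rw [hc2]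
  have hL' : ∀ i : ℤ, a ^ i * b⁻¹ = b⁻¹ * a ^ (-i) := by
    intro i
    calc a ^ i * b⁻¹ = b⁻¹ * (b * a ^ i * b⁻¹) := by group
      _ = b⁻¹ * a ^ (-i) := by rw [hc]
  -- moving a-powers past b-powers
  have hmove : ∀ j : ℤ, ∀ i : ℤ,
      a ^ i * b ^ j = b ^ j * a ^ i ∨ a ^ i * b ^ j = b ^ j * a ^ (-i) := by
    intro j
    induction j using Int.induction_on with
    | zero => intro i; left; simp
    | succ k ih =>
      intro i
      rcases ih i with h | h
      · right
        calc a ^ i * b ^ ((k : ℤ) + 1) = (a ^ i * b ^ (k : ℤ)) * b := by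
              rw [zpow_add_one]; group
          _ = b ^ (k : ℤ) * (a ^ i * b) := by rw [h]; group
          _ = b ^ (k : ℤ) * (b * a ^ (-i)) := by rw [hL]
          _ = b ^ ((k : ℤ) + 1) * a ^ (-i) := by rw [zpow_add_one]; group
      · left
        calc a ^ i * b ^ ((k : ℤ) + 1) = (a ^ i * b ^ (k : ℤ)) * b := by
              rw [zpow_add_one]; group
          _ = b ^ (k : ℤ) * (a ^ (-i) * b) := by rw [h]; group
          _ = b ^ (k : ℤ) * (b * a ^ i) := by rw [hL, neg_neg]
          _ = b ^ ((k : ℤ) + 1) * a ^ i := by rw [zpow_add_one]; group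
    | pred k ih =>
      intro i
      rcases ih i with h | h
      · right
        calc a ^ i * b ^ (-(k : ℤ) - 1) = (a ^ i * b ^ (-(k : ℤ))) * b⁻¹ := by
              rw [zpow_sub_one]; group
          _ = b ^ (-(k : ℤ)) * (a ^ i * b⁻¹) := by rw [h]; group
          _ = b ^ (-(k : ℤ)) * (b⁻¹ * a ^ (-i)) := by rw [hL']
          _ = b ^ (-(k : ℤ) - 1) * a ^ (-i) := by rw [zpow_sub_one]; group
      · left
        calc a ^ i * b ^ (-(k : ℤ) - 1) = (a ^ i * b ^ (-(k : ℤ))) * b⁻¹ := by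
              rw [zpow_sub_one]; group
          _ = b ^ (-(k : ℤ)) * (a ^ (-i) * b⁻¹) := by rw [h]; group
          _ = b ^ (-(k : ℤ)) * (b⁻¹ * a ^ i) := by rw [hL', neg_neg]
          _ = b ^ (-(k : ℤ) - 1) * a ^ i := by rw [zpow_sub_one]; group
  -- every element decomposes as b^j * a^i
  have hdec : ∀ x : G, ∃ j i : ℤ, x = b ^ j * a ^ i := by
    intro x
    have hx : x ∈ Subgroup.closure {a, b} := by rw [hgen]; exact Subgroup.mem_top x
    induction hx using Subgroup.closure_induction with
    | mem y hy =>
      rcases hy with rfl | rfl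
      · exact ⟨0, 1, by simp⟩
      · exact ⟨1, 0, by simp⟩
    | one => exact ⟨0, 0, by simp⟩
    | mul y z hy hz ihy ihz =>
      obtain ⟨j, i, rfl⟩ := ihy
      obtain ⟨k, l, rfl⟩ := ihz
      rcases hmove k i with h | h
      · refine ⟨j + k, i + l, ?_⟩
        rw [zpow_add, zpow_add]
        calc b ^ j * a ^ i * (b ^ k * a ^ l) = b ^ j * (a ^ i * b ^ k) * a ^ l := by group
          _ = b ^ j * (b ^ k * a ^ i) * a ^ l := by rw [h]
          _ = b ^ j * b ^ k * (a ^ i * a ^ l) := by group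
      · refine ⟨j + k, -i + l, ?_⟩
        rw [zpow_add, zpow_add]
        calc b ^ j * a ^ i * (b ^ k * a ^ l) = b ^ j * (a ^ i * b ^ k) * a ^ l := by group
          _ = b ^ j * (b ^ k * a ^ (-i)) * a ^ l := by rw [h]
          _ = b ^ j * b ^ k * (a ^ (-i) * a ^ l) := by group
    | inv y hy ihy =>
      obtain ⟨j, i, rfl⟩ := ihy
      rcases hmove (-j) (-i) with h | h
      · refine ⟨-j, -i, ?_⟩
        rw [← h]; group
      · refine ⟨-j, i, ?_⟩
        have h' : a ^ (-i) * b ^ (-j) = b ^ (-j) * a ^ i := by rw [h, neg_neg]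
        rw [← h']; group
  -- divisibility helpers
  have hqi : ∀ i : ℤ, a ^ (2 * i) = 1 → a ^ i = 1 := by
    intro i hi
    rw [← orderOf_dvd_iff_zpow_eq_one] at hi ⊢
    rw [ha] at hi ⊢
    have hcop : IsCoprime (q : ℤ) 2 := by
      rw [Int.isCoprime_iff_gcd_eq_one]
      have h2 : Nat.gcd q 2 = 1 := hodd.coprime_two_right
      simpa [Int.gcd] using h2
    exact hcop.dvd_of_dvd_mul_left hi
  have hb4 : b ^ (4 : ℤ) = 1 := by
    rw [← orderOf_dvd_iff_zpow_eq_one, hb]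
    norm_num
  have hbj : ∀ j : ℤ, b ^ (2 * j) = 1 → (2 : ℤ) ∣ j := by
    intro j hj
    rw [← orderOf_dvd_iff_zpow_eq_one, hb] at hj
    have hj' : (4:ℤ) ∣ 2 * j := by exact_mod_cast hj
    omega
  have hb2m : ∀ m : ℤ, b ^ (2 * m) = 1 ∨ b ^ (2 * m) = b ^ (2 : ℤ) := by
    intro m
    rcases Int.even_or_odd m with ⟨t, rfl⟩ | ⟨t, rfl⟩
    · left
      have h : (2 : ℤ) * (t + t) = 4 * t := by ring
      rw [h, zpow_mul, hb4, one_zpow]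
    · right
      have h : (2 : ℤ) * (2 * t + 1) = 4 * t + 2 := by ring
      rw [h, zpow_add, zpow_mul, hb4, one_zpow, one_mul]
  -- b^2 commutes with a
  have hb2a : Commute a (b ^ (2 : ℤ)) := by
    have e1 : a * b = b * a⁻¹ := by have h := hL 1; simpa using h
    have e2 : a⁻¹ * b = b * a := by have h := hL (-1); simpa using h
    have hbb2 : b ^ (2 : ℤ) = b * b := by
      rw [show (2:ℤ) = 1 + 1 by norm_num, zpow_add, zpow_one]
    show a * b ^ (2 : ℤ) = b ^ (2 : ℤ) * a
    rw [hbb2]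
    calc a * (b * b) = (a * b) * b := by group
      _ = b * (a⁻¹ * b) := by rw [e1]; group
      _ = b * (b * a) := by rw [e2]
      _ = b * b * a := by group
  -- unique involution: b^2
  have huniq : ∀ x : G, x * x = 1 → x = 1 ∨ x = b ^ (2 : ℤ) := by
    intro x hx
    obtain ⟨j, i, rfl⟩ := hdec x
    rcases hmove j i with h | h
    · -- commuting case : square is b^{2j} a^{2i}
      have hsq : b ^ (2 * j) * a ^ (2 * i) = 1 := by
        rw [two_mul, two_mul, zpow_add, zpow_add]
        calc b ^ j * b ^ j * (a ^ i * a ^ i) = b ^ j * (b ^ j * a ^ i) * a ^ i := by group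
          _ = b ^ j * (a ^ i * b ^ j) * a ^ i := by rw [h]
          _ = (b ^ j * a ^ i) * (b ^ j * a ^ i) := by group
          _ = 1 := hx
      have hcm : Commute (b ^ (2 * j)) (a ^ (2 * i)) := by
        have hcc : Commute (a ^ (2 * i)) ((b ^ (2 : ℤ)) ^ j) := hb2a.zpow_zpow (2 * i) j
        rw [← zpow_mul] at hcc
        exact hcc.symm
      have hsq2 : b ^ (2 * (2 * j)) * a ^ (2 * (2 * i)) = 1 := by
        rw [two_mul (2 * j), two_mul (2 * i), zpow_add, zpow_add]
        calc b ^ (2 * j) * b ^ (2 * j) * (a ^ (2 * i) * a ^ (2 * i))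
            = b ^ (2 * j) * (b ^ (2 * j) * a ^ (2 * i)) * a ^ (2 * i) := by group
          _ = b ^ (2 * j) * (a ^ (2 * i) * b ^ (2 * j)) * a ^ (2 * i) := by rw [hcm.eq]
          _ = (b ^ (2 * j) * a ^ (2 * i)) * (b ^ (2 * j) * a ^ (2 * i)) := by group
          _ = 1 := by rw [hsq, one_mul]
      have hb4j : b ^ (2 * (2 * j)) = 1 := by
        have h4 : (2 : ℤ) * (2 * j) = 4 * j := by ring
        rw [h4, zpow_mul, hb4, one_zpow]
      have ha4i : a ^ (2 * (2 * i)) = 1 := by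
        rw [hb4j, one_mul] at hsq2; exact hsq2
      have hai : a ^ i = 1 := hqi i (hqi (2 * i) ha4i)
      have h2i : a ^ (2 * i) = 1 := by rw [two_mul, zpow_add, hai, one_mul]
      rw [h2i, mul_one] at hsq
      rw [hai, mul_one]
      obtain ⟨m, rfl⟩ := hbj j hsq
      exact hb2m m
    · -- anticommuting case : square is b^{2j}
      have hsq : b ^ (2 * j) = 1 := by
        rw [two_mul, zpow_add]
        calc b ^ j * b ^ j = b ^ j * (b ^ j * a ^ (-i)) * a ^ i := by
              group
          _ = b ^ j * (a ^ i * b ^ j) * a ^ i := by rw [h]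
          _ = (b ^ j * a ^ i) * (b ^ j * a ^ i) := by group
          _ = 1 := hx
      obtain ⟨m, rfl⟩ := hbj j hsq
      have hcomm : a ^ i * b ^ (2 * m) = b ^ (2 * m) * a ^ i := by
        have hcc : Commute (a ^ i) ((b ^ (2 : ℤ)) ^ m) := hb2a.zpow_zpow i m
        rw [← zpow_mul] at hcc
        exact hcc
      rw [hcomm] at h
      have hii : a ^ i = a ^ (-i) := mul_left_cancel h
      have h2i : a ^ (2 * i) = 1 := by
        rw [two_mul, zpow_add]
        nth_rewrite 1 [hii]
        rw [← zpow_add]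
        simp
      have hai : a ^ i = 1 := hqi i h2i
      rw [hai, mul_one]
      exact hb2m m
  -- identify x₁, x₂
  have sq_ne_one : ∀ x : G, orderOf x = 2 → x * x = 1 ∧ x ≠ 1 := by
    intro x hx
    constructor
    · have h := pow_orderOf_eq_one x
      rw [hx, pow_two] at h; exact h
    · rintro rfl; simp at hx
  have hx1 : x₁ = b ^ (2 : ℤ) := by
    obtain ⟨hsq, hne⟩ := sq_ne_one x₁ h1
    rcases huniq x₁ hsq with h | h
    · exact absurd h hne
    · exact h
  have hx2 : x₂ = b ^ (2 : ℤ) := by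
    obtain ⟨hsq, hne⟩ := sq_ne_one x₂ h2
    rcases huniq x₂ hsq with h | h
    · exact absurd h hne
    · exact h
  -- x₃² = b²
  have hx3sq : x₃ ^ (2 : ℕ) = b ^ (2 : ℤ) := by
    have hsq : x₃ ^ (2 : ℕ) * x₃ ^ (2 : ℕ) = 1 := by
      have h := pow_orderOf_eq_one x₃
      rw [h3] at h
      rw [← pow_add]; exact h
    rcases huniq _ hsq with h | h
    · exfalso
      have hdvd : orderOf x₃ ∣ 2 := orderOf_dvd_of_pow_eq_one h
      rw [h3] at hdvd; omega
    · exact h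
  -- x₄ = x₃⁻¹
  have hx4 : x₄ = x₃⁻¹ := by
    rw [hx1, hx2] at hprod
    have hbb : b ^ (2 : ℤ) * b ^ (2 : ℤ) = 1 := by
      rw [← zpow_add]; norm_num [hb4]
    have hprod' : x₃ * x₄ = 1 := by
      calc x₃ * x₄ = (b ^ (2 : ℤ) * b ^ (2 : ℤ))⁻¹ * (b ^ (2:ℤ) * b ^ (2:ℤ) * x₃ * x₄) := by
            rw [hbb]; group
        _ = 1 := by rw [hprod, mul_one]; rw [hbb]; simp
    exact (inv_eq_of_mul_eq_one_right hprod').symm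
  -- the four elements lie in ⟨x₃⟩
  have hle : Subgroup.closure {x₁, x₂, x₃, x₄} ≤ Subgroup.zpowers x₃ := by
    rw [Subgroup.closure_le]
    intro y hy
    simp only [Set.mem_insert_iff, Set.mem_singleton_iff] at hy
    rcases hy with rfl | rfl | rfl | rfl
    · rw [hx1, ← hx3sq]; exact pow_mem (Subgroup.mem_zpowers _) 2
    · rw [hx2, ← hx3sq]; exact pow_mem (Subgroup.mem_zpowers _) 2
    · exact Subgroup.mem_zpowers _
    · rw [hx4]; exact Subgroup.inv_mem _ (Subgroup.mem_zpowers _)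
  have htop : Subgroup.zpowers x₃ = ⊤ := top_le_iff.mp (hclos ▸ hle)
  have hcard2 : Nat.card G = 4 := by
    rw [← Subgroup.card_top (G := G), ← htop, Nat.card_zpowers, h3]
  omega
end

section
/- Let q be an odd prime and D the dihedral group of order 4q. If g_1, g_2, g_3, g_4, g_5 are involutions of D generating D with g_1 g_2 g_3 g_4 g_5 = 1, then exactly one of the g_i equals the central involution r^q. -/
open DihedralGroup Subgroup

private def projFun (q : ℕ) : DihedralGroup (2 * q) → DihedralGroup q
  | .r i => .r (ZMod.castHom (dvd_mul_left q 2) (ZMod q) i)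
  | .sr i => .sr (ZMod.castHom (dvd_mul_left q 2) (ZMod q) i)

private def dihedralProj (q : ℕ) : DihedralGroup (2 * q) →* DihedralGroup q where
  toFun := projFun q
  map_one' := by
    show projFun q (.r 0) = .r 0
    simp [projFun]
  map_mul' := by
    rintro (a | a) (b | b) <;> simp [projFun, map_add, map_sub]

@[simp] private lemma dihedralProj_r (q : ℕ) (i : ZMod (2 * q)) :
    dihedralProj q (.r i) = .r (ZMod.castHom (dvd_mul_left q 2) (ZMod q) i) := rfl

@[simp] private lemma dihedralProj_sr (q : ℕ) (i : ZMod (2 * q)) :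
    dihedralProj q (.sr i) = .sr (ZMod.castHom (dvd_mul_left q 2) (ZMod q) i) := rfl

private lemma dihedralProj_surj (q : ℕ) [NeZero q] :
    Function.Surjective (dihedralProj q) := by
  rintro (i | i)
  · exact ⟨.r (i.val : ZMod (2 * q)), by simp [ZMod.natCast_val, ZMod.cast_id]⟩
  · exact ⟨.sr (i.val : ZMod (2 * q)), by simp [ZMod.natCast_val, ZMod.cast_id]⟩

private lemma invol_eq {q : ℕ} (hq : 2 ≤ q) (x : DihedralGroup (2 * q))
    (hx : orderOf x = 2) :
    x = .r (q : ZMod (2 * q)) ∨ ∃ a, x = .sr a := by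
  haveI : NeZero (2 * q) := ⟨by omega⟩
  cases x with
  | sr i => exact Or.inr ⟨i, rfl⟩
  | r i =>
    left
    have h2 : (DihedralGroup.r i) ^ 2 = 1 := by
      have := pow_orderOf_eq_one (DihedralGroup.r i)
      rwa [hx] at this
    rw [pow_two, r_mul_r, one_def, r.injEq] at h2
    have hi0 : i ≠ 0 := by
      rintro rfl
      rw [show (DihedralGroup.r 0 : DihedralGroup (2*q)) = 1 from rfl, orderOf_one] at hx
      omega
    have hv : ((i.val + i.val : ℕ) : ZMod (2 * q)) = 0 := by
      push_cast [ZMod.natCast_val, ZMod.cast_id]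
      exact h2
    rw [ZMod.natCast_eq_zero_iff] at hv
    have hvlt : i.val < 2 * q := i.val_lt
    have hvne : i.val ≠ 0 := fun h => hi0 (by rwa [← ZMod.val_eq_zero])
    obtain ⟨k, hk⟩ := hv
    have hq0 : 0 < q := by omega
    have hk2 : k < 2 := by nlinarith
    interval_cases k
    · omega
    · have hval : i.val = q := by omega
      have := ZMod.natCast_rightInverse (n := 2 * q) i
      rw [← this, hval]

private lemma not_gen {q : ℕ} (hq : 2 ≤ q) (a b : ZMod (2 * q))
    (hab : ZMod.castHom (dvd_mul_left q 2) (ZMod q) a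
         = ZMod.castHom (dvd_mul_left q 2) (ZMod q) b)
    (g : Fin 5 → DihedralGroup (2 * q))
    (hsub : ∀ i, g i = .r (q : ZMod (2 * q)) ∨ g i = .sr a ∨ g i = .sr b) :
    Subgroup.closure (Set.range g) ≠ ⊤ := by
  haveI : NeZero q := ⟨by omega⟩
  intro htop
  set x : DihedralGroup q := .sr (ZMod.castHom (dvd_mul_left q 2) (ZMod q) a) with hx
  have hmem : ∀ i, dihedralProj q (g i) ∈ Subgroup.zpowers x := by
    intro i
    rcases hsub i with h | h | h <;> rw [h]
    · have h0 : (ZMod.castHom (dvd_mul_left q 2) (ZMod q)) ((q : ℕ) : ZMod (2 * q)) = 0 := by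
        simp
      rw [dihedralProj_r, h0, ← one_def]
      exact one_mem _
    · rw [dihedralProj_sr, ← hx]
      exact Subgroup.mem_zpowers _
    · rw [dihedralProj_sr, ← hab, ← hx]
      exact Subgroup.mem_zpowers _
  have h1 : Subgroup.map (dihedralProj q) ⊤ = ⊤ :=
    Subgroup.map_top_of_surjective _ (dihedralProj_surj q)
  rw [← htop, MonoidHom.map_closure] at h1
  have h2 : (⊤ : Subgroup (DihedralGroup q)) ≤ Subgroup.zpowers x := by
    rw [← h1]
    apply (Subgroup.closure_le _).mpr
    rintro y ⟨z, ⟨i, rfl⟩, rfl⟩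
    exact hmem i
  have h3 : ∀ y : DihedralGroup q, y ∈ Subgroup.zpowers x :=
    fun y => h2 (Subgroup.mem_top y)
  have h4 := orderOf_eq_card_of_forall_mem_zpowers h3
  rw [hx, DihedralGroup.orderOf_sr, DihedralGroup.nat_card] at h4
  omega

/-- If five involutions of the dihedral group `D` of order `4q` (`q` an odd prime)
generate `D` and have product 1, then exactly one of them equals the central
involution `r^q`. -/
theorem stmt_11 (q : ℕ) (hq : q.Prime) (hodd : Odd q)
    (g : Fin 5 → DihedralGroup (2 * q))
    (hinv : ∀ i, orderOf (g i) = 2)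
    (hprod : g 0 * g 1 * g 2 * g 3 * g 4 = 1)
    (hgen : Subgroup.closure (Set.range g) = ⊤) :
    ∃! i : Fin 5, g i = DihedralGroup.r (q : ZMod (2 * q)) := by
  have hq2 : 2 ≤ q := hq.two_le
  haveI : NeZero (2 * q) := ⟨by omega⟩
  have hz : ((2 * q : ℕ) : ZMod (2 * q)) = 0 := ZMod.natCast_self _
  push_cast at hz
  have hqne : ((q : ℕ) : ZMod (2 * q)) ≠ 0 := by
    intro h
    rw [ZMod.natCast_eq_zero_iff] at h
    have := Nat.le_of_dvd (by omega) h
    omega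
  have h0 := invol_eq hq2 _ (hinv 0)
  have h1 := invol_eq hq2 _ (hinv 1)
  have h2 := invol_eq hq2 _ (hinv 2)
  have h3 := invol_eq hq2 _ (hinv 3)
  have h4 := invol_eq hq2 _ (hinv 4)
  rcases h0 with h0 | ⟨a0, h0⟩ <;> rcases h1 with h1 | ⟨a1, h1⟩ <;>
    rcases h2 with h2 | ⟨a2, h2⟩ <;> rcases h3 with h3 | ⟨a3, h3⟩ <;>
    rcases h4 with h4 | ⟨a4, h4⟩ <;>
  rw [h0, h1, h2, h3, h4] at hprod <;>
  simp only [r_mul_r, r_mul_sr, sr_mul_r, sr_mul_sr, one_def, r.injEq, reduceCtorEq] at hprod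
  -- 00000
  · exact absurd (by linear_combination hprod - 2 * hz) hqne
  -- 00011
  · exfalso
    refine (not_gen hq2 a3 a4 ?_ g ?_) hgen
    · have h := congrArg (ZMod.castHom (dvd_mul_left q 2) (ZMod q)) hprod
      simp only [map_sub, map_add, map_natCast, ZMod.natCast_self, map_zero] at h
      first | linear_combination h | linear_combination -h
    · intro i; fin_cases i <;> simp [h0, h1, h2, h3, h4]
  -- 00101
  · exfalso
    refine (not_gen hq2 a2 a4 ?_ g ?_) hgen
    · have h := congrArg (ZMod.castHom (dvd_mul_left q 2) (ZMod q)) hprod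
      simp only [map_sub, map_add, map_natCast, ZMod.natCast_self, map_zero] at h
      first | linear_combination h | linear_combination -h
    · intro i; fin_cases i <;> simp [h0, h1, h2, h3, h4]
  -- 00110
  · exfalso
    refine (not_gen hq2 a2 a3 ?_ g ?_) hgen
    · have h := congrArg (ZMod.castHom (dvd_mul_left q 2) (ZMod q)) hprod
      simp only [map_sub, map_add, map_natCast, ZMod.natCast_self, map_zero] at h
      first | linear_combination h | linear_combination -h
    · intro i; fin_cases i <;> simp [h0, h1, h2, h3, h4]
  -- 01001
  · exfalso
    refine (not_gen hq2 a1 a4 ?_ g ?_) hgen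
    · have h := congrArg (ZMod.castHom (dvd_mul_left q 2) (ZMod q)) hprod
      simp only [map_sub, map_add, map_natCast, ZMod.natCast_self, map_zero] at h
      first | linear_combination h | linear_combination -h
    · intro i; fin_cases i <;> simp [h0, h1, h2, h3, h4]
  -- 01010
  · exfalso
    refine (not_gen hq2 a1 a3 ?_ g ?_) hgen
    · have h := congrArg (ZMod.castHom (dvd_mul_left q 2) (ZMod q)) hprod
      simp only [map_sub, map_add, map_natCast, ZMod.natCast_self, map_zero] at h
      first | linear_combination h | linear_combination -h
    · intro i; fin_cases i <;> simp [h0, h1, h2, h3, h4]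
  -- 01100
  · exfalso
    refine (not_gen hq2 a1 a2 ?_ g ?_) hgen
    · have h := congrArg (ZMod.castHom (dvd_mul_left q 2) (ZMod q)) hprod
      simp only [map_sub, map_add, map_natCast, ZMod.natCast_self, map_zero] at h
      first | linear_combination h | linear_combination -h
    · intro i; fin_cases i <;> simp [h0, h1, h2, h3, h4]
  -- 01111 : central at 0
  · refine ⟨0, h0, ?_⟩
    intro j hj
    fin_cases j <;> simp_all
  -- 10001
  · exfalso
    refine (not_gen hq2 a0 a4 ?_ g ?_) hgen
    · have h := congrArg (ZMod.castHom (dvd_mul_left q 2) (ZMod q)) hprod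
      simp only [map_sub, map_add, map_natCast, ZMod.natCast_self, map_zero] at h
      first | linear_combination h | linear_combination -h
    · intro i; fin_cases i <;> simp [h0, h1, h2, h3, h4]
  -- 10010
  · exfalso
    refine (not_gen hq2 a0 a3 ?_ g ?_) hgen
    · have h := congrArg (ZMod.castHom (dvd_mul_left q 2) (ZMod q)) hprod
      simp only [map_sub, map_add, map_natCast, ZMod.natCast_self, map_zero] at h
      first | linear_combination h | linear_combination -h
    · intro i; fin_cases i <;> simp [h0, h1, h2, h3, h4]
  -- 10100
  · exfalso
    refine (not_gen hq2 a0 a2 ?_ g ?_) hgen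
    · have h := congrArg (ZMod.castHom (dvd_mul_left q 2) (ZMod q)) hprod
      simp only [map_sub, map_add, map_natCast, ZMod.natCast_self, map_zero] at h
      first | linear_combination h | linear_combination -h
    · intro i; fin_cases i <;> simp [h0, h1, h2, h3, h4]
  -- 10111 : central at 1
  · refine ⟨1, h1, ?_⟩
    intro j hj
    fin_cases j <;> simp_all
  -- 11000
  · exfalso
    refine (not_gen hq2 a0 a1 ?_ g ?_) hgen
    · have h := congrArg (ZMod.castHom (dvd_mul_left q 2) (ZMod q)) hprod
      simp only [map_sub, map_add, map_natCast, ZMod.natCast_self, map_zero] at h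
      first | linear_combination h | linear_combination -h
    · intro i; fin_cases i <;> simp [h0, h1, h2, h3, h4]
  -- 11011 : central at 2
  · refine ⟨2, h2, ?_⟩
    intro j hj
    fin_cases j <;> simp_all
  -- 11101 : central at 3
  · refine ⟨3, h3, ?_⟩
    intro j hj
    fin_cases j <;> simp_all
  -- 11110 : central at 4
  · refine ⟨4, h4, ?_⟩
    intro j hj
    fin_cases j <;> simp_all
end
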